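/- arXiv:2506.12626 — 8 statements merged into one kernel-verified Lean document; each statement's English description precedes it below -/
import Mathlib

section
/- Let C be an n×n matrix with strictly positive entries that is symmetric, and suppose there exists a vector d ∈ ℝⁿ with strictly positive entries such that d_i · (Cd)_i = 1 for every i (i.e., DCD is doubly stochastic where D = diag(d)). Define the Symmetric Sinkhorn–Knopp iteration by x⁽⁰⁾ = (1,…,1) and x⁽ᵗ⁺¹⁾_i = √( x⁽ᵗ⁾_i / (C x⁽ᵗ⁾)_i ) for each i. Then x⁽ᵗ⁾ converges entrywise to d as t → ∞. -/
open Matrix Filter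

set_option maxHeartbeats 2000000 in
/-- Convergence of the Symmetric Sinkhorn–Knopp iteration to the
balancing vector of a strictly positive symmetric matrix. -/
theorem ssk_converges (n : ℕ) (C : Matrix (Fin n) (Fin n) ℝ)
    (hCpos : ∀ i j, 0 < C i j) (hCsymm : C.IsSymm)
    (d : Fin n → ℝ) (hd : ∀ i, 0 < d i)
    (hbal : ∀ i, d i * (C.mulVec d) i = 1)
    (x : ℕ → Fin n → ℝ)
    (hx0 : ∀ i, x 0 i = 1)
    (hxit : ∀ t i, x (t + 1) i = Real.sqrt (x t i / (C.mulVec (x t)) i)) :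
    ∀ i, Tendsto (fun t => x t i) atTop (nhds (d i)) := by
  rcases Nat.eq_zero_or_pos n with hn | hn
  · intro i; exact absurd i.isLt (by omega)
  haveI hnem : Nonempty (Fin n) := ⟨⟨0, hn⟩⟩
  have hne : (Finset.univ : Finset (Fin n)).Nonempty := Finset.univ_nonempty
  have hnep : (Finset.univ : Finset (Fin n × Fin n)).Nonempty := Finset.univ_nonempty
  -- positivity of the iterates
  have hxpos : ∀ t j, 0 < x t j := by
    intro t
    induction t with
    | zero => intro j; rw [hx0]; norm_num
    | succ t ih =>
      intro j
      rw [hxit]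
      have hm : 0 < (C.mulVec (x t)) j := by
        rw [Matrix.mulVec, dotProduct]
        exact Finset.sum_pos (fun k _ => mul_pos (hCpos j k) (ih k)) hne
      exact Real.sqrt_pos.mpr (div_pos (ih j) hm)
  -- the weights
  set w : Fin n → Fin n → ℝ := fun j k => d j * C j k * d k with hwdef
  have hwpos : ∀ j k, 0 < w j k := fun j k => mul_pos (mul_pos (hd j) (hCpos j k)) (hd k)
  have hwsum : ∀ j, ∑ k, w j k = 1 := by
    intro j
    have h := hbal j
    rw [Matrix.mulVec, dotProduct, Finset.mul_sum] at h
    rw [← h]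
    exact Finset.sum_congr rfl (fun k _ => by simp [hwdef]; ring)
  set ε : ℝ := Finset.univ.inf' hnep (fun p : Fin n × Fin n => w p.1 p.2) with hεdef
  have hεpos : 0 < ε := by
    rw [hεdef]
    rw [Finset.lt_inf'_iff]
    exact fun p _ => hwpos p.1 p.2
  have hεle : ∀ j k, ε ≤ w j k := fun j k =>
    Finset.inf'_le _ (Finset.mem_univ ((j, k) : Fin n × Fin n))
  have hε1 : ε ≤ 1 := by
    obtain ⟨j⟩ := hnem
    calc ε ≤ w j j := hεle j j
      _ ≤ ∑ k, w j k := Finset.single_le_sum (fun k _ => (hwpos j k).le) (Finset.mem_univ j)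
      _ = 1 := hwsum j
  -- ratios
  set r : ℕ → Fin n → ℝ := fun t k => x t k / d k with hrdef
  have hrpos : ∀ t k, 0 < r t k := fun t k => div_pos (hxpos t k) (hd k)
  set M : ℕ → ℝ := fun t => Finset.univ.sup' hne (r t) with hMdef
  set m : ℕ → ℝ := fun t => Finset.univ.inf' hne (r t) with hmdef
  have hrleM : ∀ t k, r t k ≤ M t := fun t k => Finset.le_sup' _ (Finset.mem_univ k)
  have hmler : ∀ t k, m t ≤ r t k := fun t k => Finset.inf'_le _ (Finset.mem_univ k)
  have hmpos : ∀ t, 0 < m t := by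
    intro t
    rw [hmdef]
    rw [Finset.lt_inf'_iff]
    exact fun k _ => hrpos t k
  have hmM : ∀ t, m t ≤ M t := by
    intro t
    obtain ⟨j⟩ := hnem
    exact (hmler t j).trans (hrleM t j)
  -- the weighted average expression
  have hs : ∀ t j, d j * (C.mulVec (x t)) j = ∑ k, w j k * r t k := by
    intro t j
    rw [Matrix.mulVec, dotProduct, Finset.mul_sum]
    refine Finset.sum_congr rfl fun k _ => ?_
    simp only [hwdef, hrdef]
    have hk := (hd k).ne'
    field_simp
  -- bounds on the weighted average
  have hsub : ∀ t j, ∑ k, w j k * r t k ≤ M t - ε * (M t - m t) := by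
    intro t j
    obtain ⟨k₀, -, hk₀⟩ := Finset.exists_mem_eq_inf' hne (r t)
    have h1 : w j k₀ * r t k₀ + ∑ k ∈ Finset.univ.erase k₀, w j k * r t k
        = ∑ k, w j k * r t k :=
      Finset.add_sum_erase _ (fun k => w j k * r t k) (Finset.mem_univ k₀)
    have h2 : ∑ k ∈ Finset.univ.erase k₀, w j k * r t k
        ≤ ∑ k ∈ Finset.univ.erase k₀, w j k * M t :=
      Finset.sum_le_sum fun k _ => mul_le_mul_of_nonneg_left (hrleM t k) (hwpos j k).le
    have h3 : w j k₀ + ∑ k ∈ Finset.univ.erase k₀, w j k = 1 := by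
      rw [Finset.add_sum_erase _ _ (Finset.mem_univ k₀)]; exact hwsum j
    have h4 : ∑ k ∈ Finset.univ.erase k₀, w j k * M t = (1 - w j k₀) * M t := by
      rw [← Finset.sum_mul]; rw [show ∑ k ∈ Finset.univ.erase k₀, w j k = 1 - w j k₀ by linarith]
    have h5 : r t k₀ = m t := hk₀.symm
    have h6 : ε ≤ w j k₀ := hεle j k₀
    have h7 : m t ≤ M t := hmM t
    nlinarith [hwpos j k₀]
  have hslb : ∀ t j, m t + ε * (M t - m t) ≤ ∑ k, w j k * r t k := by
    intro t j
    obtain ⟨k₀, -, hk₀⟩ := Finset.exists_mem_eq_sup' hne (r t)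
    have h1 : w j k₀ * r t k₀ + ∑ k ∈ Finset.univ.erase k₀, w j k * r t k
        = ∑ k, w j k * r t k :=
      Finset.add_sum_erase _ (fun k => w j k * r t k) (Finset.mem_univ k₀)
    have h2 : ∑ k ∈ Finset.univ.erase k₀, w j k * m t
        ≤ ∑ k ∈ Finset.univ.erase k₀, w j k * r t k :=
      Finset.sum_le_sum fun k _ => mul_le_mul_of_nonneg_left (hmler t k) (hwpos j k).le
    have h3 : w j k₀ + ∑ k ∈ Finset.univ.erase k₀, w j k = 1 := by
      rw [Finset.add_sum_erase _ _ (Finset.mem_univ k₀)]; exact hwsum j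
    have h4 : ∑ k ∈ Finset.univ.erase k₀, w j k * m t = (1 - w j k₀) * m t := by
      rw [← Finset.sum_mul]; rw [show ∑ k ∈ Finset.univ.erase k₀, w j k = 1 - w j k₀ by linarith]
    have h5 : r t k₀ = M t := hk₀.symm
    have h6 : ε ≤ w j k₀ := hεle j k₀
    have h7 : m t ≤ M t := hmM t
    nlinarith [hwpos j k₀]
  have hspos : ∀ t j, 0 < ∑ k, w j k * r t k := by
    intro t j
    have := hslb t j
    nlinarith [hmpos t, hmM t, hεpos]
  -- the recurrence for ratios
  have hrrec : ∀ t j, r (t + 1) j = Real.sqrt (r t j / (∑ k, w j k * r t k)) := by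
    intro t j
    have hCx : 0 < (C.mulVec (x t)) j := by
      rw [Matrix.mulVec, dotProduct]
      exact Finset.sum_pos (fun k _ => mul_pos (hCpos j k) (hxpos t k)) hne
    have harg : r t j / (∑ k, w j k * r t k)
        = (x t j / (C.mulVec (x t)) j) / (d j) ^ 2 := by
      rw [← hs t j]
      simp only [hrdef]
      field_simp
    rw [harg, Real.sqrt_div (div_nonneg (hxpos t j).le hCx.le), Real.sqrt_sq (hd j).le]
    simp only [hrdef, hxit]
  -- bounds on the new iterate
  have hub : ∀ t j, r (t + 1) j ≤ Real.sqrt (M t / (m t + ε * (M t - m t))) := by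
    intro t j
    rw [hrrec]
    apply Real.sqrt_le_sqrt
    have hden : 0 < m t + ε * (M t - m t) := by nlinarith [hmpos t, hεpos, hmM t]
    exact div_le_div₀ (le_trans (hmpos t).le (hmM t)) (hrleM t j) hden (hslb t j)
  have hlb : ∀ t j, Real.sqrt (m t / (M t - ε * (M t - m t))) ≤ r (t + 1) j := by
    intro t j
    rw [hrrec]
    apply Real.sqrt_le_sqrt
    exact div_le_div₀ (hrpos t j).le (hmler t j) (hspos t j) (hsub t j)
  have hMub : ∀ t, M (t + 1) ≤ Real.sqrt (M t / (m t + ε * (M t - m t))) := by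
    intro t
    exact Finset.sup'_le _ _ fun j _ => hub t j
  have hmlb : ∀ t, Real.sqrt (m t / (M t - ε * (M t - m t))) ≤ m (t + 1) := by
    intro t
    exact Finset.le_inf' _ _ fun j _ => hlb t j
  -- the ratio sequence
  set ρ : ℕ → ℝ := fun t => M t / m t with hρdef
  have hρ1 : ∀ t, 1 ≤ ρ t := fun t => (one_le_div (hmpos t)).mpr (hmM t)
  set ψ : ℝ → ℝ := fun q => Real.sqrt (q * ((1 - ε) * q + ε) / (ε * q + (1 - ε))) with hψdef
  have hkey : ∀ t, ρ (t + 1) ≤ ψ (ρ t) := by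
    intro t
    have hδ : 0 ≤ M t - m t := by linarith [hmM t]
    have hd1 : 0 < m t + ε * (M t - m t) := by nlinarith [hmpos t, hεpos]
    have hd2 : 0 < M t - ε * (M t - m t) := by nlinarith [hmpos t, hε1, hmM t]
    have hlbpos : 0 < Real.sqrt (m t / (M t - ε * (M t - m t))) :=
      Real.sqrt_pos.mpr (div_pos (hmpos t) hd2)
    have h1 : ρ (t + 1) ≤ Real.sqrt (M t / (m t + ε * (M t - m t)))
        / Real.sqrt (m t / (M t - ε * (M t - m t))) := by
      exact div_le_div₀ (Real.sqrt_nonneg _) (hMub t) hlbpos (hmlb t)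
    refine h1.trans ?_
    have hnum : (0:ℝ) ≤ M t / (m t + ε * (M t - m t)) :=
      div_nonneg (le_trans (hmpos t).le (hmM t)) hd1.le
    rw [← Real.sqrt_div hnum]
    have hm0 := (hmpos t).ne'
    have hq : ε * ρ t + (1 - ε) ≠ 0 := by
      have := hρ1 t
      nlinarith
    have hq2 : m t / (M t - ε * (M t - m t)) ≠ 0 := (div_pos (hmpos t) hd2).ne'
    have harg : ρ t * ((1 - ε) * ρ t + ε) / (ε * ρ t + (1 - ε))
        = (M t / (m t + ε * (M t - m t))) / (m t / (M t - ε * (M t - m t))) := by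
      rw [div_eq_div_iff hq hq2]
      simp only [hρdef]
      field_simp
      ring
    apply le_of_eq
    simp only [hψdef]
    rw [harg]
  have hanti : ∀ t, ρ (t + 1) ≤ ρ t := by
    intro t
    refine (hkey t).trans ?_
    rw [hψdef]
    have h1 : 1 ≤ ρ t := hρ1 t
    have hden : 0 < ε * ρ t + (1 - ε) := by nlinarith
    have hkey2 : 0 ≤ ε * ρ t * ((ρ t) ^ 2 - 1) := by
      have h2 : (1:ℝ) ≤ (ρ t) ^ 2 := by nlinarith
      have h3 : 0 ≤ ε * ρ t := by nlinarith
      nlinarith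
    have h2 : ρ t * ((1 - ε) * ρ t + ε) / (ε * ρ t + (1 - ε)) ≤ (ρ t) ^ 2 := by
      rw [div_le_iff₀ hden]; nlinarith [hkey2]
    calc Real.sqrt (ρ t * ((1 - ε) * ρ t + ε) / (ε * ρ t + (1 - ε)))
        ≤ Real.sqrt ((ρ t) ^ 2) := Real.sqrt_le_sqrt h2
      _ = ρ t := Real.sqrt_sq (by linarith)
  clear_value w ε r M m ρ ψ
  have hAnti : Antitone ρ := antitone_nat_of_succ_le hanti
  have hbdd : BddBelow (Set.range ρ) := ⟨1, by rintro y ⟨t, rfl⟩; exact hρ1 t⟩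
  have hρlim : Tendsto ρ atTop (nhds (⨅ t, ρ t)) := tendsto_atTop_ciInf hAnti hbdd
  set L : ℝ := ⨅ t, ρ t with hL
  have hL1 : 1 ≤ L := by rw [hL]; exact le_ciInf hρ1
  clear_value L
  have hψcont : ContinuousAt ψ L := by
    have hden : ε * L + (1 - ε) ≠ 0 := by nlinarith
    rw [hψdef]
    exact Real.continuous_sqrt.continuousAt.comp
      (ContinuousAt.div (by fun_prop) (by fun_prop) hden)
  have hLψ : L ≤ ψ L := by
    refine le_of_tendsto_of_tendsto' ((tendsto_add_atTop_iff_nat 1).mpr hρlim)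
      (hψcont.tendsto.comp hρlim) hkey
  have hLeq : L = 1 := by
    by_contra h
    have hLgt : 1 < L := lt_of_le_of_ne hL1 (Ne.symm h)
    have hden : 0 < ε * L + (1 - ε) := by nlinarith
    have hkey2 : 0 < ε * L * (L ^ 2 - 1) := by
      have h2 : (1:ℝ) < L ^ 2 := by nlinarith
      have h3 : 0 < ε * L := by nlinarith
      nlinarith
    have h2 : L * ((1 - ε) * L + ε) / (ε * L + (1 - ε)) < L ^ 2 := by
      rw [div_lt_iff₀ hden]; nlinarith [hkey2]
    have h3 : ψ L < L := by
      rw [hψdef]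
      calc Real.sqrt (L * ((1 - ε) * L + ε) / (ε * L + (1 - ε)))
          < Real.sqrt (L ^ 2) :=
            Real.sqrt_lt_sqrt (div_nonneg (by nlinarith) hden.le) h2
        _ = L := Real.sqrt_sq (by linarith)
    linarith
  have hρto1 : Tendsto ρ atTop (nhds 1) := hLeq ▸ hρlim
  -- squeeze
  have hub2 : ∀ t j, r (t + 1) j ≤ Real.sqrt (M t / m t) := by
    intro t j
    rw [hrrec]
    apply Real.sqrt_le_sqrt
    have hms : m t ≤ ∑ k, w j k * r t k := by
      have := hslb t j
      nlinarith [hεpos, hmM t]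
    exact div_le_div₀ (le_trans (hmpos t).le (hmM t)) (hrleM t j) (hmpos t) hms
  have hlb2 : ∀ t j, Real.sqrt (m t / M t) ≤ r (t + 1) j := by
    intro t j
    rw [hrrec]
    apply Real.sqrt_le_sqrt
    have hsM : ∑ k, w j k * r t k ≤ M t := by
      have := hsub t j
      nlinarith [hεpos, hmM t]
    exact div_le_div₀ (hrpos t j).le (hmler t j) (hspos t j) hsM
  have hMmpos : ∀ t, (0:ℝ) < M t := fun t => lt_of_lt_of_le (hmpos t) (hmM t)
  have hsq1 : Tendsto (fun t => Real.sqrt (M t / m t)) atTop (nhds 1) := by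
    have : Tendsto (fun t => Real.sqrt (ρ t)) atTop (nhds (Real.sqrt 1)) :=
      (Real.continuous_sqrt.tendsto 1).comp hρto1
    simpa [Real.sqrt_one, hρdef] using this
  have hsq2 : Tendsto (fun t => Real.sqrt (m t / M t)) atTop (nhds 1) := by
    have hinv : Tendsto (fun t => (ρ t)⁻¹) atTop (nhds 1) := by
      have := hρto1.inv₀ (one_ne_zero)
      simpa using this
    have : Tendsto (fun t => Real.sqrt ((ρ t)⁻¹)) atTop (nhds (Real.sqrt 1)) :=
      (Real.continuous_sqrt.tendsto 1).comp hinv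
    have heq : (fun t => Real.sqrt ((ρ t)⁻¹)) = fun t => Real.sqrt (m t / M t) := by
      funext t
      rw [hρdef]
      congr 1
      rw [inv_div]
    rw [← heq]
    simpa [Real.sqrt_one] using this
  intro i
  have hrto1 : Tendsto (fun t => r (t + 1) i) atTop (nhds 1) :=
    tendsto_of_tendsto_of_tendsto_of_le_of_le hsq2 hsq1 (fun t => hlb2 t i) (fun t => hub2 t i)
  have hrti : Tendsto (fun t => r t i) atTop (nhds 1) :=
    (tendsto_add_atTop_iff_nat 1).mp hrto1
  have hfin : Tendsto (fun t => r t i * d i) atTop (nhds (1 * d i)) := hrti.mul_const (d i)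
  have heq : (fun t => r t i * d i) = fun t => x t i := by
    funext t
    simp only [hrdef]
    exact div_mul_cancel₀ _ (hd i).ne'
  rw [heq, one_mul] at hfin
  exact hfin
end

section
/- Let f : [0,1]² → ℝ be a bounded, continuous, strictly positive, symmetric density (f(x,y) = f(y,x)), and suppose there exists a continuous strictly positive function h : [0,1] → ℝ such that ∫₀¹ h(x) f(x,y) h(y) dx = 1 for all y ∈ [0,1]. Define the iteration g⁽⁰⁾ ≡ 1 and g⁽ᵗ⁺¹⁾(x) = √( g⁽ᵗ⁾(x) / ∫₀¹ f(x,y) g⁽ᵗ⁾(y) dy ). Then g⁽ᵗ⁾ converges uniformly on [0,1] to h as t → ∞. -/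
/-!
Conjugating by the balancing function turns the iteration into one for a Markov density: with
`P x y = h x * f x y * h y` and `r = g / h`, the step becomes `r ↦ √(r / ∫ P(·, y) r y dy)`, and
the claim becomes `r → 1` uniformly. As `P` is continuous and positive on the compact square, it
satisfies a Doeblin condition `ε P x y ≤ P x' y`, whence `∫ P(x', y) r y dy` is at most
`(1 - ε) max r + ε ∫ P(x, y) r y dy`. Hence the ratio `ρ = max r / min r` obeys
`ρ' ^ 2 ≤ ρ (ε + (1 - ε) ρ)` and decreases to `1`, while `|r' - 1| ≤ ρ - 1` because `r' ^ 2`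
lies between `1 / ρ` and `ρ`.
-/

open MeasureTheory Filter Set Topology

theorem tendsto_one_of_sq_le_mul {ρ : ℕ → ℝ} {ε : ℝ} (hε : 0 < ε)
    (hρ : ∀ t, 1 ≤ ρ t) (hrec : ∀ t, ρ (t + 1) ^ 2 ≤ ρ t * (ε + (1 - ε) * ρ t)) :
    Tendsto ρ atTop (𝓝 1) := by
  have hanti : Antitone ρ := antitone_nat_of_succ_le fun t => by
    have hle : ρ t * (ε + (1 - ε) * ρ t) ≤ ρ t ^ 2 := by
      nlinarith [mul_nonneg (mul_nonneg hε.le (zero_le_one.trans (hρ t))) (sub_nonneg.2 (hρ t))]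
    exact (pow_le_pow_iff_left₀ (by linarith [hρ (t + 1)]) (by linarith [hρ t])
      two_ne_zero).1 ((hrec t).trans hle)
  have hlim := tendsto_atTop_ciInf hanti ⟨1, forall_mem_range.2 hρ⟩
  set L := ⨅ t, ρ t
  have hL : 1 ≤ L := le_ciInf hρ
  have hLrec : L ^ 2 ≤ L * (ε + (1 - ε) * L) :=
    le_of_tendsto_of_tendsto' ((hlim.comp (tendsto_add_atTop_nat 1)).pow 2)
      (hlim.mul (tendsto_const_nhds.add (tendsto_const_nhds.mul hlim))) hrec
  have hL1 : L ≤ 1 := by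
    by_contra! h
    nlinarith [mul_pos (mul_pos hε (zero_lt_one.trans h)) (sub_pos.2 h)]
  rwa [le_antisymm hL1 hL] at hlim

theorem abs_sub_one_le_of_sq_mem_Icc {v s : ℝ} (hv : 0 ≤ v) (hs : 0 < s)
    (hvs : v ^ 2 ∈ Icc s⁻¹ s) : |v - 1| ≤ s - 1 := by
  have hinv : 2 - s ≤ s⁻¹ := by
    have hsq : s⁻¹ - (2 - s) = (s - 1) ^ 2 / s := by field_simp; ring
    rw [← sub_nonneg, hsq]
    positivity
  calc |v - 1| ≤ |v - 1| * (v + 1) := le_mul_of_one_le_right (abs_nonneg _) (by linarith)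
    _ = |v ^ 2 - 1| := by rw [← abs_of_nonneg (by linarith : 0 ≤ v + 1), ← abs_mul]; ring_nf
    _ ≤ s - 1 := abs_le.2 ⟨by linarith [hvs.1], by linarith [hvs.2]⟩

theorem IsCompact.exists_mul_le_of_continuousOn_pos {X : Type*} [TopologicalSpace X] {K : Set X}
    {F : X → ℝ} (hK : IsCompact K) (hne : K.Nonempty) (hF : ContinuousOn F K)
    (hpos : ∀ p ∈ K, 0 < F p) : ∃ ε, 0 < ε ∧ ε ≤ 1 ∧ ∀ p ∈ K, ∀ q ∈ K, ε * F q ≤ F p := by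
  obtain ⟨m, hm, hmF⟩ := hK.exists_forall_le' hF hpos
  obtain ⟨q₀, hq₀, hmax⟩ := hK.exists_isMaxOn hne hF
  have hM : 0 < F q₀ := hpos q₀ hq₀
  refine ⟨m / F q₀, by positivity, (div_le_one hM).2 (hmF q₀ hq₀), fun p hp q hq => ?_⟩
  calc m / F q₀ * F q ≤ m / F q₀ * F q₀ := by gcongr; exact hmax hq
    _ = m := div_mul_cancel₀ m hM.ne'
    _ ≤ F p := hmF p hp

theorem tendstoUniformlyOn_of_dist_le {ι α β : Type*} [PseudoMetricSpace β] {l : Filter ι}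
    {s : Set α} {F : ι → α → β} {f : α → β} {δ : ι → ℝ} (hδ : Tendsto δ l (𝓝 0))
    (hle : ∀ᶠ i in l, ∀ x ∈ s, dist (f x) (F i x) ≤ δ i) : TendstoUniformlyOn F f l s := by
  rw [Metric.tendstoUniformlyOn_iff]
  intro ε hε
  filter_upwards [hle, hδ.eventually_lt_const hε] with i hi hδi x hx
  exact (hi x hx).trans_lt hδi

theorem TendstoUniformlyOn.mul_left_of_bounded {ι α : Type*} {l : Filter ι} {s : Set α}
    {F : ι → α → ℝ} {f h : α → ℝ} {M : ℝ} (hF : TendstoUniformlyOn F f l s)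
    (hh : ∀ x ∈ s, |h x| ≤ M) :
    TendstoUniformlyOn (fun i x => h x * F i x) (fun x => h x * f x) l s := by
  rw [Metric.tendstoUniformlyOn_iff] at hF ⊢
  intro δ hδ
  filter_upwards [hF (δ / (|M| + 1)) (by positivity)] with i hi x hx
  rw [Real.dist_eq, ← mul_sub, abs_mul, ← Real.dist_eq]
  calc |h x| * dist (f x) (F i x) ≤ (|M| + 1) * dist (f x) (F i x) := by
        gcongr; linarith [hh x hx, le_abs_self M]
    _ < (|M| + 1) * (δ / (|M| + 1)) := by gcongr; exact hi x hx
    _ = δ := mul_div_cancel₀ δ (by positivity)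

theorem ContinuousOn.intervalIntegral_of_prod {a b c d : ℝ} {F : ℝ → ℝ → ℝ} (hcd : c ≤ d)
    (hab : a ≤ b) (hF : ContinuousOn (Function.uncurry F) (Icc c d ×ˢ Icc a b)) :
    ContinuousOn (fun x => ∫ y in a..b, F x y) (Icc c d) := by
  set G : ℝ → ℝ → ℝ := fun x y => F (projIcc c d hcd x) (projIcc a b hab y)
  have hG : Continuous (Function.uncurry G) :=
    hF.comp_continuous ((continuous_subtype_val.comp (continuous_projIcc (h := hcd))).prodMap
      (continuous_subtype_val.comp (continuous_projIcc (h := hab))))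
      fun p => ⟨Subtype.mem (projIcc c d hcd p.1), Subtype.mem (projIcc a b hab p.2)⟩
  refine (intervalIntegral.continuous_parametric_intervalIntegral_of_continuous' hG a b
    ).continuousOn.congr fun x hx => intervalIntegral.integral_congr fun y hy => ?_
  rw [uIcc_of_le hab] at hy
  simp [G, projIcc_of_mem _ hx, projIcc_of_mem _ hy]

section Weighted

variable {a b : ℝ} {w w' r : ℝ → ℝ}

theorem intervalIntegral_mul_le_of_le {C : ℝ} (hab : a ≤ b) (hw : ContinuousOn w (Icc a b))
    (hw0 : ∀ y ∈ Icc a b, 0 ≤ w y) (hr : ContinuousOn r (Icc a b))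
    (hrC : ∀ y ∈ Icc a b, r y ≤ C) :
    ∫ y in a..b, w y * r y ≤ (∫ y in a..b, w y) * C := by
  rw [← intervalIntegral.integral_mul_const]
  exact intervalIntegral.integral_mono_on hab ((hw.mul hr).intervalIntegrable_of_Icc hab)
    ((hw.intervalIntegrable_of_Icc hab).mul_const C)
    fun y hy => mul_le_mul_of_nonneg_left (hrC y hy) (hw0 y hy)

theorem le_intervalIntegral_mul_of_le {c : ℝ} (hab : a ≤ b) (hw : ContinuousOn w (Icc a b))
    (hw0 : ∀ y ∈ Icc a b, 0 ≤ w y) (hr : ContinuousOn r (Icc a b))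
    (hcr : ∀ y ∈ Icc a b, c ≤ r y) :
    (∫ y in a..b, w y) * c ≤ ∫ y in a..b, w y * r y := by
  rw [← intervalIntegral.integral_mul_const]
  exact intervalIntegral.integral_mono_on hab ((hw.intervalIntegrable_of_Icc hab).mul_const c)
    ((hw.mul hr).intervalIntegrable_of_Icc hab)
    fun y hy => mul_le_mul_of_nonneg_left (hcr y hy) (hw0 y hy)

theorem intervalIntegral_mul_le_of_mul_le {ε C : ℝ} (hab : a ≤ b)
    (hw : ContinuousOn w (Icc a b)) (hw' : ContinuousOn w' (Icc a b))
    (hdom : ∀ y ∈ Icc a b, ε * w' y ≤ w y) (hw1 : ∫ y in a..b, w y = 1)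
    (hw'1 : ∫ y in a..b, w' y = 1) (hr : ContinuousOn r (Icc a b))
    (hrC : ∀ y ∈ Icc a b, r y ≤ C) :
    ∫ y in a..b, w y * r y ≤ (1 - ε) * C + ε * ∫ y in a..b, w' y * r y := by
  have hint (v : ℝ → ℝ) (hv : ContinuousOn v (Icc a b)) : IntervalIntegrable v volume a b :=
    hv.intervalIntegrable_of_Icc hab
  have key := intervalIntegral_mul_le_of_le hab (hw.sub (continuousOn_const.mul hw'))
    (fun y hy => sub_nonneg.2 (hdom y hy)) hr hrC
  simp only [Pi.sub_apply, Pi.mul_apply, sub_mul, mul_assoc] at key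
  rw [intervalIntegral.integral_sub (hint (fun y => w y * r y) (hw.mul hr))
      ((hint (fun y => w' y * r y) (hw'.mul hr)).const_mul ε),
    intervalIntegral.integral_sub (hint w hw) ((hint w' hw').const_mul ε),
    intervalIntegral.integral_const_mul, intervalIntegral.integral_const_mul, hw1, hw'1] at key
  linarith

end Weighted

structure IsMarkovDensityOn (a b : ℝ) (P : ℝ → ℝ → ℝ) : Prop where
  continuousOn : ContinuousOn (Function.uncurry P) (Icc a b ×ˢ Icc a b)
  nonneg : ∀ x ∈ Icc a b, ∀ y ∈ Icc a b, 0 ≤ P x y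
  integral_eq_one : ∀ x ∈ Icc a b, ∫ y in a..b, P x y = 1

noncomputable def sinkhornStep (a b : ℝ) (P : ℝ → ℝ → ℝ) (r : ℝ → ℝ) (x : ℝ) : ℝ :=
  √(r x / ∫ y in a..b, P x y * r y)

namespace IsMarkovDensityOn

variable {a b c C ε x x' : ℝ} {P : ℝ → ℝ → ℝ} {r : ℝ → ℝ}

theorem continuousOn_integral_mul (hP : IsMarkovDensityOn a b P) (hab : a ≤ b)
    (hr : ContinuousOn r (Icc a b)) :
    ContinuousOn (fun x => ∫ y in a..b, P x y * r y) (Icc a b) :=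
  ContinuousOn.intervalIntegral_of_prod hab hab
    (hP.continuousOn.mul (hr.comp continuousOn_snd fun _ hp => hp.2))

theorem integral_mul_le (hP : IsMarkovDensityOn a b P) (hab : a ≤ b)
    (hr : ContinuousOn r (Icc a b)) (hrC : ∀ y ∈ Icc a b, r y ≤ C) (hx : x ∈ Icc a b) :
    ∫ y in a..b, P x y * r y ≤ C := by
  simpa [hP.integral_eq_one x hx] using intervalIntegral_mul_le_of_le hab
    (hP.continuousOn.uncurry_left x hx) (hP.nonneg x hx) hr hrC

theorem le_integral_mul (hP : IsMarkovDensityOn a b P) (hab : a ≤ b)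
    (hr : ContinuousOn r (Icc a b)) (hcr : ∀ y ∈ Icc a b, c ≤ r y) (hx : x ∈ Icc a b) :
    c ≤ ∫ y in a..b, P x y * r y := by
  simpa [hP.integral_eq_one x hx] using le_intervalIntegral_mul_of_le hab
    (hP.continuousOn.uncurry_left x hx) (hP.nonneg x hx) hr hcr

theorem integral_mul_pos (hP : IsMarkovDensityOn a b P) (hab : a ≤ b)
    (hr : ContinuousOn r (Icc a b)) (hr0 : ∀ y ∈ Icc a b, 0 < r y) (hx : x ∈ Icc a b) :
    0 < ∫ y in a..b, P x y * r y := by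
  obtain ⟨c, hc, hcr⟩ := isCompact_Icc.exists_forall_le' hr hr0
  exact hc.trans_le (hP.le_integral_mul hab hr hcr hx)

theorem integral_mul_le_of_mul_le (hP : IsMarkovDensityOn a b P) (hab : a ≤ b)
    (hdom : ∀ y ∈ Icc a b, ε * P x' y ≤ P x y) (hr : ContinuousOn r (Icc a b))
    (hrC : ∀ y ∈ Icc a b, r y ≤ C) (hx : x ∈ Icc a b) (hx' : x' ∈ Icc a b) :
    ∫ y in a..b, P x y * r y ≤ (1 - ε) * C + ε * ∫ y in a..b, P x' y * r y :=
  intervalIntegral_mul_le_of_mul_le hab (hP.continuousOn.uncurry_left x hx)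
    (hP.continuousOn.uncurry_left x' hx') hdom (hP.integral_eq_one x hx)
    (hP.integral_eq_one x' hx') hr hrC

theorem sinkhornStep_pos (hP : IsMarkovDensityOn a b P) (hab : a ≤ b)
    (hr : ContinuousOn r (Icc a b)) (hr0 : ∀ y ∈ Icc a b, 0 < r y) (hx : x ∈ Icc a b) :
    0 < sinkhornStep a b P r x :=
  Real.sqrt_pos.2 (div_pos (hr0 x hx) (hP.integral_mul_pos hab hr hr0 hx))

theorem continuousOn_sinkhornStep (hP : IsMarkovDensityOn a b P) (hab : a ≤ b)
    (hr : ContinuousOn r (Icc a b)) (hr0 : ∀ y ∈ Icc a b, 0 < r y) :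
    ContinuousOn (sinkhornStep a b P r) (Icc a b) :=
  (hr.div (hP.continuousOn_integral_mul hab hr)
    fun _ hx => (hP.integral_mul_pos hab hr hr0 hx).ne').sqrt

theorem sq_sinkhornStep (hP : IsMarkovDensityOn a b P) (hab : a ≤ b)
    (hr : ContinuousOn r (Icc a b)) (hr0 : ∀ y ∈ Icc a b, 0 < r y) (hx : x ∈ Icc a b) :
    sinkhornStep a b P r x ^ 2 = r x / ∫ y in a..b, P x y * r y :=
  Real.sq_sqrt (div_pos (hr0 x hx) (hP.integral_mul_pos hab hr hr0 hx)).le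

theorem sq_sinkhornStep_mem_Icc (hP : IsMarkovDensityOn a b P) (hab : a ≤ b)
    (hr : ContinuousOn r (Icc a b)) (hc : 0 < c) (hcr : ∀ y ∈ Icc a b, c ≤ r y)
    (hrC : ∀ y ∈ Icc a b, r y ≤ C) (hx : x ∈ Icc a b) :
    sinkhornStep a b P r x ^ 2 ∈ Icc (c / C) (C / c) := by
  have hr0 (y) (hy : y ∈ Icc a b) : 0 < r y := hc.trans_le (hcr y hy)
  have hK := hP.le_integral_mul hab hr hcr hx
  rw [hP.sq_sinkhornStep hab hr hr0 hx]
  exact ⟨div_le_div₀ (hr0 x hx).le (hcr x hx) (hc.trans_le hK)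
    (hP.integral_mul_le hab hr hrC hx),
    div_le_div₀ (hc.le.trans ((hcr x hx).trans (hrC x hx))) (hrC x hx) hc hK⟩

theorem sq_sinkhornStep_le_mul (hP : IsMarkovDensityOn a b P) (hab : a ≤ b) (hε1 : ε ≤ 1)
    (hdom : ∀ y ∈ Icc a b, ε * P x y ≤ P x' y) (hr : ContinuousOn r (Icc a b)) (hc : 0 < c)
    (hcr : ∀ y ∈ Icc a b, c ≤ r y) (hrC : ∀ y ∈ Icc a b, r y ≤ C) (hx : x ∈ Icc a b)
    (hx' : x' ∈ Icc a b) :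
    sinkhornStep a b P r x ^ 2 ≤
      C / c * (ε + (1 - ε) * (C / c)) * sinkhornStep a b P r x' ^ 2 := by
  have hr0 (y) (hy : y ∈ Icc a b) : 0 < r y := hc.trans_le (hcr y hy)
  rw [hP.sq_sinkhornStep hab hr hr0 hx, hP.sq_sinkhornStep hab hr hr0 hx']
  set k := ∫ y in a..b, P x y * r y
  set k' := ∫ y in a..b, P x' y * r y
  have hck : c ≤ k := hP.le_integral_mul hab hr hcr hx
  have hk' : k' ≤ (1 - ε) * C + ε * k := hP.integral_mul_le_of_mul_le hab hdom hr hrC hx' hx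
  have hk'0 : 0 < k' := hP.integral_mul_pos hab hr hr0 hx'
  have hC0 : 0 ≤ C := hc.le.trans ((hcr x hx).trans (hrC x hx))
  have hu : r x / r x' ≤ C / c := div_le_div₀ hC0 (hrC x hx) hc (hcr x' hx')
  have hk : k' / k ≤ ε + (1 - ε) * (C / c) := by
    have hCk : C ≤ C / c * k := by
      rw [div_mul_eq_mul_div, le_div_iff₀ hc]; exact mul_le_mul_of_nonneg_left hck hC0
    rw [div_le_iff₀ (hc.trans_le hck)]
    calc k' ≤ (1 - ε) * C + ε * k := hk'
      _ ≤ (1 - ε) * (C / c * k) + ε * k := by gcongr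
      _ = (ε + (1 - ε) * (C / c)) * k := by ring
  calc r x / k = r x / r x' * (k' / k) * (r x' / k') := by
        field_simp [(hr0 x' hx').ne', hk'0.ne']
    _ ≤ C / c * (ε + (1 - ε) * (C / c)) * (r x' / k') :=
        mul_le_mul_of_nonneg_right (mul_le_mul hu hk (div_nonneg hk'0.le (hc.trans_le hck).le)
          (div_nonneg hC0 hc.le)) (div_nonneg (hr0 x' hx').le hk'0.le)

theorem tendstoUniformlyOn_iterate_sinkhornStep (hP : IsMarkovDensityOn a b P) (hab : a ≤ b)
    (hε : 0 < ε) (hε1 : ε ≤ 1)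
    (hdom : ∀ x ∈ Icc a b, ∀ x' ∈ Icc a b, ∀ y ∈ Icc a b, ε * P x y ≤ P x' y)
    {r : ℕ → ℝ → ℝ} (hcont₀ : ContinuousOn (r 0) (Icc a b)) (hpos₀ : ∀ x ∈ Icc a b, 0 < r 0 x)
    (hstep : ∀ t, ∀ x ∈ Icc a b, r (t + 1) x = sinkhornStep a b P (r t) x) :
    TendstoUniformlyOn r 1 atTop (Icc a b) := by
  have hreg (t : ℕ) : ContinuousOn (r t) (Icc a b) ∧ ∀ x ∈ Icc a b, 0 < r t x := by
    induction t with
    | zero => exact ⟨hcont₀, hpos₀⟩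
    | succ t ih =>
      refine ⟨(hP.continuousOn_sinkhornStep hab ih.1 ih.2).congr (hstep t), fun x hx => ?_⟩
      rw [hstep t x hx]
      exact hP.sinkhornStep_pos hab ih.1 ih.2 hx
  have hne : (Icc a b).Nonempty := nonempty_Icc.2 hab
  choose xmax hxmax hmax using fun t => isCompact_Icc.exists_isMaxOn hne (hreg t).1
  choose xmin hxmin hmin using fun t => isCompact_Icc.exists_isMinOn hne (hreg t).1
  have hc (t : ℕ) : 0 < r t (xmin t) := (hreg t).2 _ (hxmin t)
  set ρ : ℕ → ℝ := fun t => r t (xmax t) / r t (xmin t)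
  have hρ1 (t : ℕ) : 1 ≤ ρ t := (one_le_div (hc t)).2 (hmin t (hxmax t))
  have hρrec (t : ℕ) : ρ (t + 1) ^ 2 ≤ ρ t * (ε + (1 - ε) * ρ t) := by
    have key := hP.sq_sinkhornStep_le_mul hab hε1 (hdom _ (hxmax (t + 1)) _ (hxmin (t + 1)))
      (hreg t).1 (hc t) (fun y hy => hmin t hy) (fun y hy => hmax t hy) (hxmax (t + 1))
      (hxmin (t + 1))
    rw [← hstep t _ (hxmax (t + 1)), ← hstep t _ (hxmin (t + 1))] at key
    rwa [div_pow, div_le_iff₀ (pow_pos (hc (t + 1)) 2)]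
  have hdist (t : ℕ) (x : ℝ) (hx : x ∈ Icc a b) : dist 1 (r (t + 1) x) ≤ ρ t - 1 := by
    have hsq := hP.sq_sinkhornStep_mem_Icc hab (hreg t).1 (hc t) (fun y hy => hmin t hy)
      (fun y hy => hmax t hy) hx
    rw [← hstep t x hx, ← inv_div] at hsq
    rw [dist_comm, Real.dist_eq]
    exact abs_sub_one_le_of_sq_mem_Icc ((hreg (t + 1)).2 x hx).le
      (zero_lt_one.trans_le (hρ1 t)) hsq
  refine tendstoUniformlyOn_of_dist_le (δ := fun t => ρ (t - 1) - 1) ?_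
    (eventually_atTop.2 ⟨1, fun t ht x hx => ?_⟩)
  · simpa using
      ((tendsto_one_of_sq_le_mul hε hρ1 hρrec).comp (tendsto_sub_atTop_nat 1)).sub_const 1
  · obtain ⟨t, rfl⟩ := Nat.exists_eq_add_of_le' ht
    exact hdist t x hx

end IsMarkovDensityOn

section Balancing

variable {a b : ℝ} {f : ℝ → ℝ → ℝ} {h : ℝ → ℝ}

theorem isMarkovDensityOn_of_balancing (hab : a ≤ b)
    (hfc : ContinuousOn (Function.uncurry f) (Icc a b ×ˢ Icc a b))
    (hf0 : ∀ x ∈ Icc a b, ∀ y ∈ Icc a b, 0 ≤ f x y)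
    (hfsymm : ∀ x ∈ Icc a b, ∀ y ∈ Icc a b, f x y = f y x) (hhc : ContinuousOn h (Icc a b))
    (hh0 : ∀ x ∈ Icc a b, 0 ≤ h x)
    (hbal : ∀ y ∈ Icc a b, ∫ x in a..b, h x * f x y * h y = 1) :
    IsMarkovDensityOn a b fun x y => h x * f x y * h y where
  continuousOn :=
    ((hhc.comp continuousOn_fst fun _ hp => hp.1).mul hfc).mul
      (hhc.comp continuousOn_snd fun _ hp => hp.2)
  nonneg x hx y hy := mul_nonneg (mul_nonneg (hh0 x hx) (hf0 x hx y hy)) (hh0 y hy)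
  integral_eq_one x hx := by
    rw [← hbal x hx]
    refine intervalIntegral.integral_congr fun y hy => ?_
    rw [uIcc_of_le hab] at hy
    simp only [hfsymm x hx y hy]
    ring

theorem sinkhornStep_balancing (hh : ∀ x ∈ Icc a b, 0 < h x) (hab : a ≤ b) (u : ℝ → ℝ)
    {x : ℝ} (hx : x ∈ Icc a b) :
    sinkhornStep a b (fun x y => h x * f x y * h y) (fun y => u y / h y) x
      = √(u x / ∫ y in a..b, f x y * u y) / h x := by
  have hK : ∫ y in a..b, h x * f x y * h y * (u y / h y) = h x * ∫ y in a..b, f x y * u y := by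
    rw [← intervalIntegral.integral_const_mul]
    refine intervalIntegral.integral_congr fun y hy => ?_
    rw [uIcc_of_le hab] at hy
    field_simp [(hh y hy).ne']
  rw [sinkhornStep, hK, div_div, ← mul_assoc, ← sq, mul_comm, ← div_div,
    Real.sqrt_div' _ (sq_nonneg _), Real.sqrt_sq (hh x hx).le]

end Balancing

theorem cssk_converges_general (f : ℝ → ℝ → ℝ)
    (hfc : ContinuousOn (fun p : ℝ × ℝ => f p.1 p.2)
      (Set.Icc 0 1 ×ˢ Set.Icc 0 1))
    (hfpos : ∀ x ∈ Set.Icc (0:ℝ) 1, ∀ y ∈ Set.Icc (0:ℝ) 1, 0 < f x y)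
    (hfsymm : ∀ x y, f x y = f y x)
    (h : ℝ → ℝ) (hhc : ContinuousOn h (Set.Icc 0 1))
    (hhpos : ∀ x ∈ Set.Icc (0:ℝ) 1, 0 < h x)
    (hbal : ∀ y ∈ Set.Icc (0:ℝ) 1, ∫ x in (0:ℝ)..1, h x * f x y * h y = 1)
    (g : ℕ → ℝ → ℝ) (hg0 : ∀ x, g 0 x = 1)
    (hgit : ∀ t x, g (t + 1) x
      = Real.sqrt (g t x / ∫ y in (0:ℝ)..1, f x y * g t y)) :
    TendstoUniformlyOn (fun t => g t) h atTop (Set.Icc 0 1) := by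
  set P : ℝ → ℝ → ℝ := fun x y => h x * f x y * h y
  have hP : IsMarkovDensityOn 0 1 P := isMarkovDensityOn_of_balancing zero_le_one hfc
    (fun x hx y hy => (hfpos x hx y hy).le) (fun x _ y _ => hfsymm x y) hhc
    (fun x hx => (hhpos x hx).le) hbal
  obtain ⟨ε, hε, hε1, hmul⟩ :=
    (isCompact_Icc.prod isCompact_Icc).exists_mul_le_of_continuousOn_pos ⟨(0, 0), by simp⟩
      hP.continuousOn fun p hp =>
        mul_pos (mul_pos (hhpos _ hp.1) (hfpos _ hp.1 _ hp.2)) (hhpos _ hp.2)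
  have hr := hP.tendstoUniformlyOn_iterate_sinkhornStep zero_le_one hε hε1
    (fun x hx x' hx' y hy => hmul (x', y) ⟨hx', hy⟩ (x, y) ⟨hx, hy⟩)
    (r := fun t x => g t x / h x)
    (by simp only [hg0, one_div]; exact hhc.inv₀ fun x hx => (hhpos x hx).ne')
    (fun x hx => by simpa [hg0] using hhpos x hx)
    (fun t x hx => by rw [sinkhornStep_balancing hhpos zero_le_one (g t) hx, hgit])
  obtain ⟨M, hM⟩ := isCompact_Icc.exists_bound_of_continuousOn hhc
  have hgh : TendstoUniformlyOn (fun t x => h x * (g t x / h x)) h atTop (Set.Icc 0 1) := by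
    simpa only [Pi.one_apply, mul_one] using hr.mul_left_of_bounded hM
  exact hgh.congr (Eventually.of_forall fun t x hx => mul_div_cancel₀ (g t x) (hhpos x hx).ne')

/-- Convergence of the Continuous Symmetric Sinkhorn–Knopp
iteration to the balancing function of a bounded, continuous, strictly
positive, symmetric density on the unit square. -/
theorem cssk_converges (f : ℝ → ℝ → ℝ)
    (hfc : ContinuousOn (fun p : ℝ × ℝ => f p.1 p.2)
      (Set.Icc 0 1 ×ˢ Set.Icc 0 1))
    (hfb : ∃ B : ℝ, ∀ x ∈ Set.Icc (0:ℝ) 1, ∀ y ∈ Set.Icc (0:ℝ) 1, f x y ≤ B)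
    (hfpos : ∀ x ∈ Set.Icc (0:ℝ) 1, ∀ y ∈ Set.Icc (0:ℝ) 1, 0 < f x y)
    (hfsymm : ∀ x y, f x y = f y x)
    (h : ℝ → ℝ) (hhc : ContinuousOn h (Set.Icc 0 1))
    (hhpos : ∀ x ∈ Set.Icc (0:ℝ) 1, 0 < h x)
    (hbal : ∀ y ∈ Set.Icc (0:ℝ) 1, ∫ x in (0:ℝ)..1, h x * f x y * h y = 1)
    (g : ℕ → ℝ → ℝ) (hg0 : ∀ x, g 0 x = 1)
    (hgit : ∀ t x, g (t + 1) x
      = Real.sqrt (g t x / ∫ y in (0:ℝ)..1, f x y * g t y)) :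
    TendstoUniformlyOn (fun t => g t) h atTop (Set.Icc 0 1) :=
  cssk_converges_general f hfc hfpos hfsymm h hhc hhpos hbal g hg0 hgit
end

section
/- Let C and Ĉ be strictly positive, symmetric n×n matrices whose minimum entry equals 1 and whose maximum entry is less than M, with ‖C − Ĉ‖_F < ε/n. Let d and d̂ be the positive vectors such that, with D = diag(d) and D̂ = diag(d̂), one has DCDe = e/n and D̂ĈD̂e = e/n, where e is the all-ones vector. Then ‖D − D̂‖_F < M ε. -/
open Matrix

/-- Stability of the (row sums 1/n) matrix balancing under
Frobenius perturbation: if ‖C − Ĉ‖_F < ε/n then ‖D − D̂‖_F < Mε. -/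
theorem matrix_balancing_stability (n : ℕ) (M ε : ℝ)
    (C Ch : Matrix (Fin n) (Fin n) ℝ)
    (hCpos : ∀ i j, 0 < C i j) (hChpos : ∀ i j, 0 < Ch i j)
    (hCsymm : C.IsSymm) (hChsymm : Ch.IsSymm)
    (hCge : ∀ i j, 1 ≤ C i j) (hCmin : ∃ i j, C i j = 1)
    (hChge : ∀ i j, 1 ≤ Ch i j) (hChmin : ∃ i j, Ch i j = 1)
    (hCmax : ∀ i j, C i j < M) (hChmax : ∀ i j, Ch i j < M)
    (hclose : Real.sqrt (∑ i, ∑ j, (C i j - Ch i j) ^ 2) < ε / n)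
    (d dh : Fin n → ℝ) (hd : ∀ i, 0 < d i) (hdh : ∀ i, 0 < dh i)
    (hbal : ∀ i, d i * (∑ j, C i j * d j) = 1 / n)
    (hbalh : ∀ i, dh i * (∑ j, Ch i j * dh j) = 1 / n) :
    Real.sqrt (∑ i, ∑ j, ((Matrix.diagonal d - Matrix.diagonal dh) i j) ^ 2)
      < M * ε := by
  -- the case n = 0 is impossible, since then ε / n = 0
  rcases Nat.eq_zero_or_pos n with hn0 | hn
  · subst hn0
    simp at hclose
  have hn' : (1:ℝ) ≤ (n:ℝ) := by exact_mod_cast hn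
  have hnpos : (0:ℝ) < (n:ℝ) := by linarith
  -- ε > 0
  have hεn : 0 < ε / n := lt_of_le_of_lt (Real.sqrt_nonneg _) hclose
  have hεpos : 0 < ε := by
    have h2 := mul_pos hεn hnpos
    rwa [div_mul_cancel₀ _ hnpos.ne'] at h2
  -- M > 1
  have hM : 1 < M := lt_of_le_of_lt (hCge ⟨0, hn⟩ ⟨0, hn⟩) (hCmax _ _)
  have hs : ∀ k : Fin n, 0 < d k + dh k := fun k => add_pos (hd k) (hdh k)
  -- ℓ² bounds on d and dh
  have norm_bd : ∀ (B : Matrix (Fin n) (Fin n) ℝ) (x : Fin n → ℝ),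
      (∀ i j, 1 ≤ B i j) → (∀ i, 0 < x i) →
      (∀ i, x i * (∑ j, B i j * x j) = 1 / n) → ∑ i, x i ^ 2 ≤ 1 := by
    intro B x hBge hx hxbal
    have hterm : ∀ i, x i ^ 2 ≤ x i * ∑ j, B i j * x j := by
      intro i
      have h2 : B i i * x i ≤ ∑ j, B i j * x j := by
        apply Finset.single_le_sum (f := fun j => B i j * x j) ?_ (Finset.mem_univ i)
        intro j _
        exact mul_nonneg (le_trans zero_le_one (hBge i j)) (hx j).le
      nlinarith [hx i, hBge i i, mul_le_mul_of_nonneg_left h2 (hx i).le]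
    calc ∑ i, x i ^ 2 ≤ ∑ i : Fin n, x i * ∑ j, B i j * x j :=
          Finset.sum_le_sum fun i _ => hterm i
      _ = ∑ i : Fin n, (1 / n : ℝ) := Finset.sum_congr rfl fun i _ => hxbal i
      _ = n * (1 / n : ℝ) := by simp [Finset.sum_const, Finset.card_univ, mul_comm]
      _ = 1 := by field_simp
  have hd2 : ∑ i, d i ^ 2 ≤ 1 := norm_bd C d hCge hd hbal
  have hdh2 : ∑ i, dh i ^ 2 ≤ 1 := norm_bd Ch dh hChge hdh hbalh
  -- key identity coming from the two balancing conditions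
  have key : ∀ i, ∑ j, (C i j + Ch i j) * (d i * d j - dh i * dh j)
      = dh i * (∑ j, (Ch i j - C i j) * dh j) + d i * (∑ j, (Ch i j - C i j) * d j) := by
    intro i
    have l1 : ∑ j, (C i j + Ch i j) * (d i * d j - dh i * dh j)
        = d i * (∑ j, C i j * d j) + d i * (∑ j, Ch i j * d j)
          - dh i * (∑ j, C i j * dh j) - dh i * (∑ j, Ch i j * dh j) := by
      simp only [Finset.mul_sum, ← Finset.sum_add_distrib, ← Finset.sum_sub_distrib]
      exact Finset.sum_congr rfl fun j _ => by ring
    have l2 : dh i * (∑ j, (Ch i j - C i j) * dh j) + d i * (∑ j, (Ch i j - C i j) * d j)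
        = dh i * (∑ j, Ch i j * dh j) - dh i * (∑ j, C i j * dh j)
          + (d i * (∑ j, Ch i j * d j) - d i * (∑ j, C i j * d j)) := by
      simp only [Finset.mul_sum, ← Finset.sum_sub_distrib, ← Finset.sum_add_distrib]
      exact Finset.sum_congr rfl fun j _ => by ring
    rw [l1, l2]
    linarith [hbal i, hbalh i]
  -- symmetrization of the weighted sum
  have hsym : ∑ i, (d i - dh i) / (d i + dh i)
        * (∑ j, (C i j + Ch i j) * (d i * d j - dh i * dh j))
      = ∑ i, ∑ j, (C i j + Ch i j) * (d i * d j - dh i * dh j) ^ 2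
          / ((d i + dh i) * (d j + dh j)) := by
    have hstep : ∑ i, (d i - dh i) / (d i + dh i)
          * (∑ j, (C i j + Ch i j) * (d i * d j - dh i * dh j))
        = ∑ i, ∑ j, (d i - dh i) / (d i + dh i)
            * ((C i j + Ch i j) * (d i * d j - dh i * dh j)) :=
      Finset.sum_congr rfl fun i _ => Finset.mul_sum _ _ _
    rw [hstep]
    have hswap : ∑ i, ∑ j, (d i - dh i) / (d i + dh i)
          * ((C i j + Ch i j) * (d i * d j - dh i * dh j))
        = ∑ i, ∑ j, (d j - dh j) / (d j + dh j)
            * ((C j i + Ch j i) * (d j * d i - dh j * dh i)) :=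
      Finset.sum_comm
    have hpt : ∀ i j : Fin n,
        (d i - dh i) / (d i + dh i) * ((C i j + Ch i j) * (d i * d j - dh i * dh j))
        + (d j - dh j) / (d j + dh j) * ((C j i + Ch j i) * (d j * d i - dh j * dh i))
        = 2 * ((C i j + Ch i j) * (d i * d j - dh i * dh j) ^ 2
            / ((d i + dh i) * (d j + dh j))) := by
      intro i j
      rw [hCsymm.apply i j, hChsymm.apply i j]
      have hsi := (hs i).ne'
      have hsj := (hs j).ne'
      field_simp
      ring
    have h2 : (2:ℝ) * ∑ i, ∑ j, (d i - dh i) / (d i + dh i)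
          * ((C i j + Ch i j) * (d i * d j - dh i * dh j))
        = 2 * ∑ i, ∑ j, (C i j + Ch i j) * (d i * d j - dh i * dh j) ^ 2
            / ((d i + dh i) * (d j + dh j)) := by
      calc (2:ℝ) * ∑ i, ∑ j, (d i - dh i) / (d i + dh i)
            * ((C i j + Ch i j) * (d i * d j - dh i * dh j))
          = (∑ i, ∑ j, (d i - dh i) / (d i + dh i)
              * ((C i j + Ch i j) * (d i * d j - dh i * dh j)))
            + ∑ i, ∑ j, (d j - dh j) / (d j + dh j)
              * ((C j i + Ch j i) * (d j * d i - dh j * dh i)) := by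
            rw [← hswap]; ring
        _ = ∑ i, ∑ j, ((d i - dh i) / (d i + dh i)
              * ((C i j + Ch i j) * (d i * d j - dh i * dh j))
              + (d j - dh j) / (d j + dh j)
              * ((C j i + Ch j i) * (d j * d i - dh j * dh i))) := by
            rw [← Finset.sum_add_distrib]
            exact Finset.sum_congr rfl fun i _ => (Finset.sum_add_distrib).symm
        _ = ∑ i, ∑ j, 2 * ((C i j + Ch i j) * (d i * d j - dh i * dh j) ^ 2
              / ((d i + dh i) * (d j + dh j))) :=
            Finset.sum_congr rfl fun i _ => Finset.sum_congr rfl fun j _ => hpt i j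
        _ = 2 * ∑ i, ∑ j, (C i j + Ch i j) * (d i * d j - dh i * dh j) ^ 2
              / ((d i + dh i) * (d j + dh j)) := by
            rw [Finset.mul_sum]
            exact Finset.sum_congr rfl fun i _ => (Finset.mul_sum _ _ _).symm
    linarith
  -- diagonal lower bound
  have hlow : ∀ i, 2 * (d i - dh i) ^ 2
      ≤ ∑ j, (C i j + Ch i j) * (d i * d j - dh i * dh j) ^ 2
          / ((d i + dh i) * (d j + dh j)) := by
    intro i
    have h1 : (C i i + Ch i i) * (d i * d i - dh i * dh i) ^ 2 / ((d i + dh i) * (d i + dh i))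
        ≤ ∑ j, (C i j + Ch i j) * (d i * d j - dh i * dh j) ^ 2
            / ((d i + dh i) * (d j + dh j)) := by
      apply Finset.single_le_sum
        (f := fun j => (C i j + Ch i j) * (d i * d j - dh i * dh j) ^ 2
          / ((d i + dh i) * (d j + dh j))) ?_ (Finset.mem_univ i)
      intro j _
      have := hCpos i j; have := hChpos i j; have := hs i; have := hs j
      positivity
    have h2 : (C i i + Ch i i) * (d i * d i - dh i * dh i) ^ 2 / ((d i + dh i) * (d i + dh i))
        = (C i i + Ch i i) * (d i - dh i) ^ 2 := by
      have hne := (hs i).ne'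
      field_simp
      ring
    rw [h2] at h1
    nlinarith [sq_nonneg (d i - dh i), hCge i i, hChge i i]
  -- upper bound by Cauchy–Schwarz
  have hup : ∑ i, (d i - dh i) / (d i + dh i)
        * (dh i * (∑ j, (Ch i j - C i j) * dh j) + d i * (∑ j, (Ch i j - C i j) * d j))
      ≤ Real.sqrt (∑ i, (d i - dh i) ^ 2)
        * Real.sqrt (∑ i, ∑ j, (C i j - Ch i j) ^ 2) := by
    set g : Fin n → ℝ := fun i => Real.sqrt (∑ j, (C i j - Ch i j) ^ 2) with hg
    have hgnn : ∀ i, 0 ≤ g i := fun i => Real.sqrt_nonneg _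
    have habsE : ∀ i, Real.sqrt (∑ j, |Ch i j - C i j| ^ 2) = g i := by
      intro i
      rw [hg]
      congr 1
      exact Finset.sum_congr rfl fun j _ => by rw [sq_abs]; ring
    have hT1 : ∀ i, |∑ j, (Ch i j - C i j) * d j| ≤ g i := by
      intro i
      calc |∑ j, (Ch i j - C i j) * d j| ≤ ∑ j, |(Ch i j - C i j) * d j| :=
            Finset.abs_sum_le_sum_abs _ _
        _ = ∑ j, |Ch i j - C i j| * d j :=
            Finset.sum_congr rfl fun j _ => by rw [abs_mul, abs_of_pos (hd j)]
        _ ≤ Real.sqrt (∑ j, |Ch i j - C i j| ^ 2) * Real.sqrt (∑ j, d j ^ 2) :=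
            Real.sum_mul_le_sqrt_mul_sqrt _ _ _
        _ ≤ g i * 1 := by
            rw [habsE i]
            exact mul_le_mul_of_nonneg_left (Real.sqrt_le_one.mpr hd2) (hgnn i)
        _ = g i := mul_one _
    have hT2 : ∀ i, |∑ j, (Ch i j - C i j) * dh j| ≤ g i := by
      intro i
      calc |∑ j, (Ch i j - C i j) * dh j| ≤ ∑ j, |(Ch i j - C i j) * dh j| :=
            Finset.abs_sum_le_sum_abs _ _
        _ = ∑ j, |Ch i j - C i j| * dh j :=
            Finset.sum_congr rfl fun j _ => by rw [abs_mul, abs_of_pos (hdh j)]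
        _ ≤ Real.sqrt (∑ j, |Ch i j - C i j| ^ 2) * Real.sqrt (∑ j, dh j ^ 2) :=
            Real.sum_mul_le_sqrt_mul_sqrt _ _ _
        _ ≤ g i * 1 := by
            rw [habsE i]
            exact mul_le_mul_of_nonneg_left (Real.sqrt_le_one.mpr hdh2) (hgnn i)
        _ = g i := mul_one _
    have hterm : ∀ i, (d i - dh i) / (d i + dh i)
          * (dh i * (∑ j, (Ch i j - C i j) * dh j) + d i * (∑ j, (Ch i j - C i j) * d j))
        ≤ |d i - dh i| * g i := by
      intro i
      calc (d i - dh i) / (d i + dh i)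
            * (dh i * (∑ j, (Ch i j - C i j) * dh j) + d i * (∑ j, (Ch i j - C i j) * d j))
          ≤ |(d i - dh i) / (d i + dh i)
            * (dh i * (∑ j, (Ch i j - C i j) * dh j) + d i * (∑ j, (Ch i j - C i j) * d j))| :=
            le_abs_self _
        _ = |d i - dh i| / (d i + dh i)
            * |dh i * (∑ j, (Ch i j - C i j) * dh j) + d i * (∑ j, (Ch i j - C i j) * d j)| := by
            rw [abs_mul, abs_div, abs_of_pos (hs i)]
        _ ≤ |d i - dh i| / (d i + dh i) * ((d i + dh i) * g i) := by
            apply mul_le_mul_of_nonneg_left ?_ (div_nonneg (abs_nonneg _) (hs i).le)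
            calc |dh i * (∑ j, (Ch i j - C i j) * dh j) + d i * (∑ j, (Ch i j - C i j) * d j)|
                ≤ |dh i * (∑ j, (Ch i j - C i j) * dh j)|
                  + |d i * (∑ j, (Ch i j - C i j) * d j)| := abs_add_le _ _
              _ = dh i * |∑ j, (Ch i j - C i j) * dh j|
                  + d i * |∑ j, (Ch i j - C i j) * d j| := by
                  rw [abs_mul, abs_mul, abs_of_pos (hdh i), abs_of_pos (hd i)]
              _ ≤ dh i * g i + d i * g i := by
                  have h1 := mul_le_mul_of_nonneg_left (hT2 i) (hdh i).le
                  have h2 := mul_le_mul_of_nonneg_left (hT1 i) (hd i).le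
                  linarith
              _ = (d i + dh i) * g i := by ring
        _ = |d i - dh i| * g i := by
            have hne := (hs i).ne'
            field_simp
    calc ∑ i, (d i - dh i) / (d i + dh i)
          * (dh i * (∑ j, (Ch i j - C i j) * dh j) + d i * (∑ j, (Ch i j - C i j) * d j))
        ≤ ∑ i, |d i - dh i| * g i := Finset.sum_le_sum fun i _ => hterm i
      _ ≤ Real.sqrt (∑ i, |d i - dh i| ^ 2) * Real.sqrt (∑ i, g i ^ 2) :=
          Real.sum_mul_le_sqrt_mul_sqrt _ _ _
      _ = Real.sqrt (∑ i, (d i - dh i) ^ 2) * Real.sqrt (∑ i, ∑ j, (C i j - Ch i j) ^ 2) := by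
          congr 1
          · congr 1
            exact Finset.sum_congr rfl fun i _ => sq_abs _
          · congr 1
            exact Finset.sum_congr rfl fun i _ => Real.sq_sqrt (by positivity)
  -- combine everything : 2 ∑ u² ≤ U F
  have main : 2 * ∑ i, (d i - dh i) ^ 2
      ≤ Real.sqrt (∑ i, (d i - dh i) ^ 2) * Real.sqrt (∑ i, ∑ j, (C i j - Ch i j) ^ 2) := by
    calc 2 * ∑ i, (d i - dh i) ^ 2 = ∑ i, 2 * (d i - dh i) ^ 2 := by
          rw [Finset.mul_sum]
      _ ≤ ∑ i, ∑ j, (C i j + Ch i j) * (d i * d j - dh i * dh j) ^ 2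
            / ((d i + dh i) * (d j + dh j)) := Finset.sum_le_sum fun i _ => hlow i
      _ = ∑ i, (d i - dh i) / (d i + dh i)
            * (∑ j, (C i j + Ch i j) * (d i * d j - dh i * dh j)) := hsym.symm
      _ = ∑ i, (d i - dh i) / (d i + dh i)
            * (dh i * (∑ j, (Ch i j - C i j) * dh j) + d i * (∑ j, (Ch i j - C i j) * d j)) :=
          Finset.sum_congr rfl fun i _ => by rw [key i]
      _ ≤ Real.sqrt (∑ i, (d i - dh i) ^ 2) * Real.sqrt (∑ i, ∑ j, (C i j - Ch i j) ^ 2) := hup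
  set U : ℝ := Real.sqrt (∑ i, (d i - dh i) ^ 2) with hU
  set F : ℝ := Real.sqrt (∑ i, ∑ j, (C i j - Ch i j) ^ 2) with hF
  have hUnn : 0 ≤ U := Real.sqrt_nonneg _
  have hU2 : U ^ 2 = ∑ i, (d i - dh i) ^ 2 := Real.sq_sqrt (by positivity)
  have hUleF : U ≤ F := by
    rcases eq_or_lt_of_le hUnn with h | h
    · rw [← h]; exact Real.sqrt_nonneg _
    · have : U * U ≤ U * F := by nlinarith [main, hU2]
      exact le_of_mul_le_mul_left this h
  -- rewrite the goal
  have hgoal_eq : ∑ i, ∑ j, ((Matrix.diagonal d - Matrix.diagonal dh) i j) ^ 2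
      = ∑ i, (d i - dh i) ^ 2 := by
    apply Finset.sum_congr rfl
    intro i _
    calc ∑ j, ((Matrix.diagonal d - Matrix.diagonal dh) i j) ^ 2
        = ∑ j, (if i = j then (d i - dh i) ^ 2 else 0) := by
          apply Finset.sum_congr rfl
          intro j _
          by_cases h : i = j
          · subst h; simp [Matrix.sub_apply, Matrix.diagonal_apply_eq]
          · simp [Matrix.sub_apply, Matrix.diagonal_apply_ne _ h, h]
      _ = (d i - dh i) ^ 2 := by simp
  rw [hgoal_eq]
  calc U ≤ F := hUleF
    _ < ε / n := hclose
    _ ≤ ε := by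
        rw [div_le_iff₀ hnpos]
        nlinarith
    _ < M * ε := by nlinarith
end

section
/- Let C be an n×n positive symmetric matrix with min_{i,j} c_{ij} = 1 and max_{i,j} c_{ij} < M, and let d be a positive vector satisfying the balancing equation Σ_{j=1}^n c_{ij} d_i d_j = 1 for every i. Then √(n/M) ≤ Σ_{i=1}^n d_i ≤ √n, and consequently 1/(M√n) ≤ d_i ≤ √(M/n) for every i. -/
/-- Absolute bounds on the balancing vector of a positive
symmetric matrix whose minimum entry is 1 and maximum entry is below M. -/
theorem balancing_vector_bounds (n : ℕ) (M : ℝ)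
    (C : Matrix (Fin n) (Fin n) ℝ)
    (hCpos : ∀ i j, 0 < C i j) (hCsymm : C.IsSymm)
    (hCge : ∀ i j, 1 ≤ C i j) (hCmin : ∃ i j, C i j = 1)
    (hCmax : ∀ i j, C i j < M)
    (d : Fin n → ℝ) (hd : ∀ i, 0 < d i)
    (hbal : ∀ i, ∑ j, C i j * d i * d j = 1) :
    (Real.sqrt (n / M) ≤ ∑ i, d i ∧ (∑ i, d i) ≤ Real.sqrt n)
    ∧ ∀ i, 1 / (M * Real.sqrt n) ≤ d i ∧ d i ≤ Real.sqrt (M / n) := by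
  rcases Nat.eq_zero_or_pos n with hn | hn
  · subst hn
    simp
  have i0 : Fin n := ⟨0, hn⟩
  have hM : 1 < M := lt_of_le_of_lt (hCge i0 i0) (hCmax i0 i0)
  have hM0 : 0 < M := lt_trans one_pos hM
  have hnR : (0:ℝ) < n := by exact_mod_cast hn
  set S := ∑ i, d i with hSdef
  have hS0 : 0 < S := Finset.sum_pos (fun i _ => hd i) ⟨i0, Finset.mem_univ i0⟩
  -- per-row bounds
  have h1 : ∀ i, d i * S ≤ 1 := by
    intro i
    have : d i * S = ∑ j, 1 * d i * d j := by
      simp [hSdef, Finset.mul_sum]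
    rw [this]
    have hle : ∑ j, 1 * d i * d j ≤ ∑ j, C i j * d i * d j := by
      refine Finset.sum_le_sum fun j _ => ?_
      exact mul_le_mul_of_nonneg_right
        (mul_le_mul_of_nonneg_right (hCge i j) (hd i).le) (hd j).le
    rw [hbal i] at hle
    exact hle
  have h2 : ∀ i, 1 ≤ M * (d i * S) := by
    intro i
    have hMS : M * (d i * S) = ∑ j, M * d i * d j := by
      simp [hSdef, Finset.mul_sum, mul_assoc]
    rw [hMS]
    have hle : ∑ j, C i j * d i * d j ≤ ∑ j, M * d i * d j := by
      refine Finset.sum_le_sum fun j _ => ?_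
      exact mul_le_mul_of_nonneg_right
        (mul_le_mul_of_nonneg_right (hCmax i j).le (hd i).le) (hd j).le
    rw [hbal i] at hle
    exact hle
  -- sum bounds
  have hup : S * S ≤ n := by
    have : ∑ i, d i * S ≤ ∑ i : Fin n, (1:ℝ) := Finset.sum_le_sum fun i _ => h1 i
    simpa [hSdef, Finset.sum_mul] using this
  have hlo : (n:ℝ) ≤ M * (S * S) := by
    have : ∑ i : Fin n, (1:ℝ) ≤ ∑ i, M * (d i * S) :=
      Finset.sum_le_sum fun i _ => h2 i
    have h' : (n:ℝ) ≤ M * ∑ i, d i * S := by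
      simpa [Finset.mul_sum] using this
    calc (n:ℝ) ≤ M * ∑ i, d i * S := h'
      _ = M * (S * S) := by rw [← Finset.sum_mul]
  have hSle : S ≤ Real.sqrt n := by
    have : S = Real.sqrt (S * S) := by
      rw [Real.sqrt_mul_self (le_of_lt hS0)]
    rw [this]
    exact Real.sqrt_le_sqrt hup
  have hSge : Real.sqrt (n / M) ≤ S := by
    have h1' : (n:ℝ) / M ≤ S * S := by
      rw [div_le_iff₀ hM0]; nlinarith
    calc Real.sqrt (n / M) ≤ Real.sqrt (S * S) := Real.sqrt_le_sqrt h1'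
      _ = S := Real.sqrt_mul_self (le_of_lt hS0)
  refine ⟨⟨hSge, hSle⟩, fun i => ?_⟩
  have hsqn : 0 < Real.sqrt n := Real.sqrt_pos.mpr hnR
  constructor
  · -- 1 / (M * √n) ≤ d i
    have hMs : 0 < M * Real.sqrt n := mul_pos hM0 hsqn
    rw [div_le_iff₀ hMs]
    have hdi : 1 ≤ d i * (M * S) := by
      have := h2 i; nlinarith
    have : d i * (M * S) ≤ d i * (M * Real.sqrt n) := by
      have := hd i
      have : M * S ≤ M * Real.sqrt n := by nlinarith
      nlinarith [hd i]
    nlinarith [hd i]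
  · -- d i ≤ √(M/n)
    have hdiS : d i ≤ 1 / S := by
      rw [le_div_iff₀ hS0]; exact h1 i
    have hnM0 : 0 < (n:ℝ) / M := div_pos hnR hM0
    have hsq0 : 0 < Real.sqrt (n / M) := Real.sqrt_pos.mpr hnM0
    have hinv : (1:ℝ) / S ≤ 1 / Real.sqrt (n / M) :=
      one_div_le_one_div_of_le hsq0 hSge
    have heq : 1 / Real.sqrt (n / M) = Real.sqrt (M / n) := by
      rw [one_div, ← Real.sqrt_inv]
      congr 1
      field_simp
    calc d i ≤ 1 / S := hdiS
      _ ≤ 1 / Real.sqrt (n / M) := hinv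
      _ = Real.sqrt (M / n) := heq
end

section
/- Let C be an n×n strictly positive symmetric matrix and define T_C on the cone of strictly positive vectors by (T_C x)_i = √( x_i / (Cx)_i ). Then for all strictly positive vectors x, y with d(x,y) > 0, one has d(T_C x, T_C y) < d(x, y), where d is Hilbert's projective metric d(x,y) = log( max_i (x_i/y_i) / min_i (x_i/y_i) ). -/
open Matrix

lemma exists_eq_ciSup' {n : ℕ} (hn : 0 < n) (f : Fin n → ℝ) : ∃ i, f i = ⨆ j, f j := by
  haveI : Nonempty (Fin n) := ⟨⟨0, hn⟩⟩
  obtain ⟨i, hi⟩ := Finite.exists_max f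
  exact ⟨i, le_antisymm (le_ciSup (Set.finite_range f).bddAbove i) (ciSup_le hi)⟩

lemma exists_eq_ciInf' {n : ℕ} (hn : 0 < n) (f : Fin n → ℝ) : ∃ i, f i = ⨅ j, f j := by
  haveI : Nonempty (Fin n) := ⟨⟨0, hn⟩⟩
  obtain ⟨i, hi⟩ := Finite.exists_min f
  exact ⟨i, le_antisymm (le_ciInf hi) (ciInf_le (Set.finite_range f).bddBelow i)⟩

/-- Hilbert's projective metric on the cone of strictly positive vectors. -/
noncomputable def hilbertDist {n : ℕ} (x y : Fin n → ℝ) : ℝ :=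
  Real.log ((⨆ i, x i / y i) / (⨅ i, x i / y i))

/-- The Symmetric Sinkhorn–Knopp operator
T_C x = √(x ⊘ Cx) is a strict contraction for Hilbert's projective metric. -/
theorem ssk_operator_contraction (n : ℕ) (hn : 0 < n)
    (C : Matrix (Fin n) (Fin n) ℝ)
    (hCpos : ∀ i j, 0 < C i j) (hCsymm : C.IsSymm)
    (x y : Fin n → ℝ) (hx : ∀ i, 0 < x i) (hy : ∀ i, 0 < y i)
    (hxy : 0 < hilbertDist x y) :
    hilbertDist (fun i => Real.sqrt (x i / (C.mulVec x) i))
        (fun i => Real.sqrt (y i / (C.mulVec y) i))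
      < hilbertDist x y := by
  haveI : Nonempty (Fin n) := ⟨⟨0, hn⟩⟩
  set Cx := C.mulVec x with hCxdef
  set Cy := C.mulVec y with hCydef
  have hCx : ∀ i, 0 < Cx i := by
    intro i
    apply Finset.sum_pos (fun j _ => mul_pos (hCpos i j) (hx j)) Finset.univ_nonempty
  have hCy : ∀ i, 0 < Cy i := by
    intro i
    apply Finset.sum_pos (fun j _ => mul_pos (hCpos i j) (hy j)) Finset.univ_nonempty
  set r : Fin n → ℝ := fun i => x i / y i with hrdef
  set M : ℝ := ⨆ i, r i with hMdef
  set m : ℝ := ⨅ i, r i with hmdef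
  obtain ⟨iM, hiM⟩ := exists_eq_ciSup' hn r
  obtain ⟨im, him⟩ := exists_eq_ciInf' hn r
  have hr_pos : ∀ i, 0 < r i := fun i => div_pos (hx i) (hy i)
  have hr_le : ∀ i, r i ≤ M := fun i => le_ciSup (Set.finite_range r).bddAbove i
  have hr_ge : ∀ i, m ≤ r i := fun i => ciInf_le (Set.finite_range r).bddBelow i
  have hm_pos : 0 < m := by rw [hmdef, ← him]; exact hr_pos im
  have hmleM : m ≤ M := (hr_ge iM).trans (hr_le iM)
  have hM_pos : 0 < M := hm_pos.trans_le hmleM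
  have hmM : m < M := by
    have h1 : 0 < Real.log (M / m) := hxy
    have h2 : 1 < M / m := by
      by_contra h
      push_neg at h
      have := Real.log_nonpos (by positivity) h
      linarith
    calc m = 1 * m := (one_mul m).symm
    _ < (M / m) * m := by apply mul_lt_mul_of_pos_right h2 hm_pos
    _ = M := by field_simp
  have hrim : r im = m := by rw [hmdef, him]
  have hriM : r iM = M := by rw [hMdef, hiM]
  -- key strict inequalities for Cx vs Cy
  have hupper : ∀ i, Cx i < M * Cy i := by
    intro i
    have hsum : Cx i = ∑ j, C i j * x j := rfl
    have hsum' : M * Cy i = ∑ j, C i j * (M * y j) := by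
      show M * ∑ j, C i j * y j = _
      rw [Finset.mul_sum]; congr 1; ext j; ring
    rw [hsum, hsum']
    apply Finset.sum_lt_sum
    · intro j _
      have hj : x j ≤ M * y j := (div_le_iff₀ (hy j)).mp (hr_le j)
      exact mul_le_mul_of_nonneg_left hj (hCpos i j).le
    · refine ⟨im, Finset.mem_univ _, ?_⟩
      have h0 : x im / y im < M := by
        have : r im < M := hrim ▸ hmM
        exact this
      have hxm : x im < M * y im := (div_lt_iff₀ (hy im)).mp h0
      exact mul_lt_mul_of_pos_left hxm (hCpos i im)
  have hlower : ∀ i, m * Cy i < Cx i := by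
    intro i
    have hsum : Cx i = ∑ j, C i j * x j := rfl
    have hsum' : m * Cy i = ∑ j, C i j * (m * y j) := by
      show m * ∑ j, C i j * y j = _
      rw [Finset.mul_sum]; congr 1; ext j; ring
    rw [hsum, hsum']
    apply Finset.sum_lt_sum
    · intro j _
      have hj : m * y j ≤ x j := (le_div_iff₀ (hy j)).mp (hr_ge j)
      exact mul_le_mul_of_nonneg_left hj (hCpos i j).le
    · refine ⟨iM, Finset.mem_univ _, ?_⟩
      have h0 : m < x iM / y iM := by
        have : m < r iM := hriM ▸ hmM
        exact this
      have hxm : m * y iM < x iM := (lt_div_iff₀ (hy iM)).mp h0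
      exact mul_lt_mul_of_pos_left hxm (hCpos i iM)
  set s : Fin n → ℝ := fun i => Cx i / Cy i with hsdef
  have hs_lt : ∀ i, s i < M := fun i => (div_lt_iff₀ (hCy i)).mpr (hupper i)
  have hs_gt : ∀ i, m < s i := fun i => (lt_div_iff₀ (hCy i)).mpr (hlower i)
  set M' : ℝ := ⨆ i, s i with hM'def
  set m' : ℝ := ⨅ i, s i with hm'def
  obtain ⟨iM', hiM'⟩ := exists_eq_ciSup' hn s
  obtain ⟨im', him'⟩ := exists_eq_ciInf' hn s
  have hs_le : ∀ i, s i ≤ M' := fun i => le_ciSup (Set.finite_range s).bddAbove i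
  have hs_ge : ∀ i, m' ≤ s i := fun i => ciInf_le (Set.finite_range s).bddBelow i
  have hM'_lt : M' < M := by rw [hM'def, ← hiM']; exact hs_lt iM'
  have hm'_gt : m < m' := by rw [hm'def, ← him']; exact hs_gt im'
  have hm'_pos : 0 < m' := hm_pos.trans hm'_gt
  have hM'_pos : 0 < M' := hm'_pos.trans_le ((hs_ge iM').trans (hs_le iM'))
  -- rewrite the ratios of T
  have ht : ∀ i, Real.sqrt (x i / Cx i) / Real.sqrt (y i / Cy i)
      = Real.sqrt (r i / s i) := by
    intro i
    rw [← Real.sqrt_div (div_pos (hx i) (hCx i)).le]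
    congr 1
    show x i / Cx i / (y i / Cy i) = x i / y i / (Cx i / Cy i)
    have h1 := (hx i).ne'
    have h2 := (hy i).ne'
    have h3 := (hCx i).ne'
    have h4 := (hCy i).ne'
    field_simp
  have hA_pos : (0:ℝ) < Real.sqrt (m / M') := Real.sqrt_pos.mpr (div_pos hm_pos hM'_pos)
  have hB_pos : (0:ℝ) < Real.sqrt (M / m') := Real.sqrt_pos.mpr (div_pos hM_pos hm'_pos)
  have ht_le : ∀ i, Real.sqrt (r i / s i) ≤ Real.sqrt (M / m') := by
    intro i
    apply Real.sqrt_le_sqrt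
    exact div_le_div₀ hM_pos.le (hr_le i) hm'_pos (hs_ge i)
  have ht_ge : ∀ i, Real.sqrt (m / M') ≤ Real.sqrt (r i / s i) := by
    intro i
    apply Real.sqrt_le_sqrt
    exact div_le_div₀ (hr_pos i).le (hr_ge i) (hm_pos.trans (hs_gt i)) (hs_le i)
  have hsup_le : (⨆ i, Real.sqrt (r i / s i)) ≤ Real.sqrt (M / m') := ciSup_le ht_le
  have hinf_ge : Real.sqrt (m / M') ≤ ⨅ i, Real.sqrt (r i / s i) := le_ciInf ht_ge
  have hinf_pos : 0 < ⨅ i, Real.sqrt (r i / s i) := hA_pos.trans_le hinf_ge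
  have hsup_pos : 0 < ⨆ i, Real.sqrt (r i / s i) := by
    refine hinf_pos.trans_le ?_
    calc (⨅ i, Real.sqrt (r i / s i)) ≤ Real.sqrt (r iM / s iM) :=
      ciInf_le (Set.finite_range fun i => Real.sqrt (r i / s i)).bddBelow iM
    _ ≤ ⨆ i, Real.sqrt (r i / s i) :=
      le_ciSup (Set.finite_range fun i => Real.sqrt (r i / s i)).bddAbove iM
  have hgoal_eq : hilbertDist (fun i => Real.sqrt (x i / Cx i))
      (fun i => Real.sqrt (y i / Cy i))
      = Real.log ((⨆ i, Real.sqrt (r i / s i)) / (⨅ i, Real.sqrt (r i / s i))) := by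
    unfold hilbertDist
    rw [iSup_congr ht, iInf_congr ht]
  have hquot_le : (⨆ i, Real.sqrt (r i / s i)) / (⨅ i, Real.sqrt (r i / s i))
      ≤ Real.sqrt (M / m') / Real.sqrt (m / M') :=
    div_le_div₀ hB_pos.le hsup_le hA_pos hinf_ge
  have hkey : Real.sqrt (M / m') / Real.sqrt (m / M') < M / m := by
    rw [← Real.sqrt_div (div_pos hM_pos hm'_pos).le]
    rw [Real.sqrt_lt' (by positivity)]
    have heq : M / m' / (m / M') = M * M' / (m * m') := by field_simp
    rw [heq, div_pow, div_lt_div_iff₀ (by positivity) (by positivity)]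
    have h1 : M' * m < M * m' := by nlinarith
    nlinarith [sq_nonneg M, sq_nonneg m, mul_pos hM_pos hm_pos]
  rw [hgoal_eq]
  show Real.log _ < Real.log (M / m)
  calc Real.log ((⨆ i, Real.sqrt (r i / s i)) / (⨅ i, Real.sqrt (r i / s i)))
      ≤ Real.log (Real.sqrt (M / m') / Real.sqrt (m / M')) :=
        Real.log_le_log (by positivity) hquot_le
    _ < Real.log (M / m) := Real.log_lt_log (by positivity) hkey
end

section
/- (Sinkhorn's theorem) Let C be an n×n matrix with strictly positive entries. Then there exist diagonal matrices D₁ and D₂ with strictly positive diagonal entries such that P = D₁ C D₂ is doubly stochastic, and P is the unique doubly stochastic matrix of this form. Moreover, D₁ and D₂ are unique up to a scalar factor: if D₁′ and D₂′ are positive diagonal matrices with D₁′ C D₂′ doubly stochastic, then there is α > 0 with D₁ = α D₁′ and α D₂ = D₂′. -/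
/-
Existence: the scaled matrix `diagonal (C *ᵥ y)⁻¹ * C * diagonal y` always has unit row sums,
and its column sums `c j = s j * y j`, where `s = (C *ᵥ y)⁻¹ ᵥ* C`, add up to `n`. Take `y`
maximising the degree-zero homogeneous function `∏ y j / ∏ (C *ᵥ y) i`; it exists by compactness
of the simplex and has positive entries. Comparing `y` with `z = s⁻¹` and using `log t ≤ t - 1`
twice gives `∑ log (c j) ≥ 0`, which together with `∑ c j = n` forces every `c j = 1`.

Uniqueness: if `Q > 0` and `diagonal r * Q * diagonal s` are both doubly stochastic, compare the
row of the largest `r i` with the column of the smallest `s j`: this gives `max r * min s = 1`, and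
the equality case forces `s`, hence `r`, to be constant.
-/

open Matrix

def IsDoublyStochastic {n : ℕ} (P : Matrix (Fin n) (Fin n) ℝ) : Prop :=
  (∀ i j, 0 ≤ P i j) ∧ (∀ i, ∑ j, P i j = 1) ∧ (∀ j, ∑ i, P i j = 1)

open Finset Real

theorem diagonal_mul_mul_diagonal_apply {m α : Type*} [Fintype m] [DecidableEq m]
    [NonUnitalNonAssocSemiring α] (d₁ d₂ : m → α) (C : Matrix m m α) (i j : m) :
    (diagonal d₁ * C * diagonal d₂) i j = d₁ i * C i j * d₂ j := by
  simp [mul_diagonal, diagonal_mul]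

section Potential

variable {ι : Type*} [Fintype ι] {C : Matrix ι ι ℝ}

theorem sum_log_le_zero {t : ι → ℝ} (ht : ∀ i, 0 < t i) (hsum : ∑ i, t i = Fintype.card ι) :
    ∑ i, log (t i) ≤ 0 :=
  calc ∑ i, log (t i) ≤ ∑ i, (t i - 1) := sum_le_sum fun i _ => log_le_sub_one_of_pos (ht i)
    _ = 0 := by simp [sum_sub_distrib, hsum]

theorem eq_one_of_sum_log_nonneg {t : ι → ℝ} (ht : ∀ i, 0 < t i)
    (hsum : ∑ i, t i = Fintype.card ι) (hlog : 0 ≤ ∑ i, log (t i)) (i : ι) : t i = 1 := by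
  have hle : ∀ i ∈ univ, log (t i) ≤ t i - 1 := fun i _ => log_le_sub_one_of_pos (ht i)
  have heq : ∑ i, log (t i) = ∑ i, (t i - 1) :=
    le_antisymm (sum_le_sum hle) (by simpa [sum_sub_distrib, hsum] using hlog)
  by_contra hi
  exact (log_lt_sub_one_of_pos (ht i) hi).ne ((sum_eq_sum_iff_of_le hle).1 heq i (mem_univ i))

theorem mulVec_pos_of_pos (hC : ∀ i j, 0 < C i j) {x : ι → ℝ} (hx : ∀ j, 0 ≤ x j)
    (hx₀ : ∃ j, 0 < x j) (i : ι) : 0 < (C *ᵥ x) i := by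
  obtain ⟨j, hj⟩ := hx₀
  exact sum_pos' (fun j _ => mul_nonneg (hC i j).le (hx j)) ⟨j, mem_univ j, mul_pos (hC i j) hj⟩

variable (C) in
noncomputable def sinkhornPotential (x : ι → ℝ) : ℝ := (∏ j, x j) / ∏ i, (C *ᵥ x) i

variable (C) in
theorem sinkhornPotential_smul {c : ℝ} (hc : c ≠ 0) (x : ι → ℝ) :
    sinkhornPotential C (c • x) = sinkhornPotential C x := by
  simp only [sinkhornPotential, mulVec_smul, Pi.smul_apply, smul_eq_mul, prod_mul_distrib,
    prod_const]
  exact mul_div_mul_left _ _ (pow_ne_zero _ hc)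

theorem sinkhornPotential_pos (hC : ∀ i j, 0 < C i j) {x : ι → ℝ} (hx : ∀ j, 0 < x j) :
    0 < sinkhornPotential C x :=
  div_pos (prod_pos fun j _ => hx j)
    (prod_pos fun i _ => mulVec_pos_of_pos hC (fun j => (hx j).le) ⟨i, hx i⟩ i)

theorem log_sinkhornPotential (hC : ∀ i j, 0 < C i j) {x : ι → ℝ} (hx : ∀ j, 0 < x j) :
    log (sinkhornPotential C x) = ∑ j, log (x j) - ∑ i, log ((C *ᵥ x) i) := by
  have hCx i : 0 < (C *ᵥ x) i := mulVec_pos_of_pos hC (fun j => (hx j).le) ⟨i, hx i⟩ i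
  rw [sinkhornPotential, log_div (prod_pos fun j _ => hx j).ne' (prod_pos fun i _ => hCx i).ne',
    log_prod fun j _ => (hx j).ne', log_prod fun i _ => (hCx i).ne']

theorem continuousOn_sinkhornPotential (hC : ∀ i j, 0 < C i j) :
    ContinuousOn (sinkhornPotential C) (stdSimplex ℝ ι) := by
  refine ContinuousOn.div (by fun_prop) (by fun_prop) fun x hx => (prod_pos fun i _ => ?_).ne'
  obtain ⟨j, -, hj⟩ := exists_lt_of_sum_lt (f := 0) (s := univ) (g := x) (by simp [hx.2])
  exact mulVec_pos_of_pos hC hx.1 ⟨j, hj⟩ i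

theorem exists_forall_sinkhornPotential_le (hC : ∀ i j, 0 < C i j) :
    ∃ y : ι → ℝ, (∀ j, 0 < y j) ∧
      ∀ z : ι → ℝ, (∀ j, 0 < z j) → sinkhornPotential C z ≤ sinkhornPotential C y := by
  obtain hι | hι := isEmpty_or_nonempty ι
  · exact ⟨1, isEmptyElim, fun z _ => (congrArg _ (Subsingleton.elim z 1)).le⟩
  have hcard : (0 : ℝ) < Fintype.card ι := by exact_mod_cast Fintype.card_pos
  set u : ι → ℝ := fun _ => (Fintype.card ι : ℝ)⁻¹
  have hu : u ∈ stdSimplex ℝ ι := ⟨fun _ => (inv_pos.2 hcard).le, by simp [u, hcard.ne']⟩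
  obtain ⟨y, hy, hmax⟩ :=
    (isCompact_stdSimplex ℝ ι).exists_isMaxOn ⟨u, hu⟩ (continuousOn_sinkhornPotential hC)
  have hy_pos : ∀ j, 0 < y j := by
    refine fun j => (hy.1 j).lt_of_ne' fun hj => ?_
    have hzero : sinkhornPotential C y = 0 := by
      simp [sinkhornPotential, prod_eq_zero (mem_univ j) hj]
    exact (sinkhornPotential_pos hC fun _ => inv_pos.2 hcard).not_ge (hzero ▸ hmax hu)
  refine ⟨y, hy_pos, fun z hz => ?_⟩
  have hsum : 0 < ∑ j, z j := sum_pos (fun j _ => hz j) univ_nonempty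
  have hz' : (∑ j, z j)⁻¹ • z ∈ stdSimplex ℝ ι :=
    ⟨fun j => mul_nonneg (inv_pos.2 hsum).le (hz j).le, by simp [← mul_sum, hsum.ne']⟩
  calc sinkhornPotential C z = sinkhornPotential C ((∑ j, z j)⁻¹ • z) :=
        (sinkhornPotential_smul C (inv_ne_zero hsum.ne') z).symm
    _ ≤ sinkhornPotential C y := hmax hz'

theorem vecMul_inv_mulVec_mul_eq_one (hC : ∀ i j, 0 < C i j) {y : ι → ℝ} (hy : ∀ j, 0 < y j)
    (hmax : ∀ z : ι → ℝ, (∀ j, 0 < z j) → sinkhornPotential C z ≤ sinkhornPotential C y)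
    (j : ι) : ((C *ᵥ y)⁻¹ ᵥ* C) j * y j = 1 := by
  set u := C *ᵥ y
  have hu : ∀ i, 0 < u i := fun i => mulVec_pos_of_pos hC (fun j => (hy j).le) ⟨i, hy i⟩ i
  set s := u⁻¹ ᵥ* C
  have hs : ∀ j, 0 < s j := fun j => by
    rw [show s = Cᵀ *ᵥ u⁻¹ from (mulVec_transpose C u⁻¹).symm]
    exact mulVec_pos_of_pos (fun i j => hC j i) (fun i => (inv_pos.2 (hu i)).le)
      ⟨j, inv_pos.2 (hu j)⟩ j
  set z := s⁻¹
  have hz : ∀ j, 0 < z j := fun j => inv_pos.2 (hs j)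
  have hCz : ∀ i, 0 < (C *ᵥ z) i := fun i => mulVec_pos_of_pos hC (fun j => (hz j).le) ⟨i, hz i⟩ i
  have hc_sum : ∑ j, s j * y j = Fintype.card ι := by
    change s ⬝ᵥ y = _
    rw [← dotProduct_mulVec]
    change ∑ i, (u i)⁻¹ * u i = _
    simp [sum_congr rfl fun i _ => inv_mul_cancel₀ (hu i).ne']
  have ha_sum : ∑ i, (C *ᵥ z) i / u i = Fintype.card ι := by
    simp_rw [div_eq_inv_mul]
    change u⁻¹ ⬝ᵥ (C *ᵥ z) = _
    rw [dotProduct_mulVec]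
    change ∑ j, s j * (s j)⁻¹ = _
    simp [sum_congr rfl fun j _ => mul_inv_cancel₀ (hs j).ne']
  have hlog_c : ∑ j, log (s j * y j) = ∑ j, log (s j) + ∑ j, log (y j) := by
    rw [← sum_add_distrib]; exact sum_congr rfl fun j _ => log_mul (hs j).ne' (hy j).ne'
  have hlog_a : ∑ i, log ((C *ᵥ z) i / u i) = ∑ i, log ((C *ᵥ z) i) - ∑ i, log (u i) := by
    rw [← sum_sub_distrib]; exact sum_congr rfl fun i _ => log_div (hCz i).ne' (hu i).ne'
  have hlog_z : ∑ j, log (z j) = -∑ j, log (s j) := by simp [z, log_inv]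
  have hlog_le := log_le_log (sinkhornPotential_pos hC hz) (hmax z hz)
  rw [log_sinkhornPotential hC hz, log_sinkhornPotential hC hy] at hlog_le
  have hlog_a_le := sum_log_le_zero (fun i => div_pos (hCz i) (hu i)) ha_sum
  exact eq_one_of_sum_log_nonneg (fun j => mul_pos (hs j) (hy j)) hc_sum (by linarith) j

end Potential

section Scaling

variable {n : ℕ} {C : Matrix (Fin n) (Fin n) ℝ}

theorem isDoublyStochastic_diagonal_mul_mul_diagonal {d₁ d₂ : Fin n → ℝ}
    (hd₁ : ∀ i, 0 ≤ d₁ i) (hC : ∀ i j, 0 ≤ C i j) (hd₂ : ∀ j, 0 ≤ d₂ j)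
    (hrow : ∀ i, d₁ i * (C *ᵥ d₂) i = 1) (hcol : ∀ j, (d₁ ᵥ* C) j * d₂ j = 1) :
    IsDoublyStochastic (diagonal d₁ * C * diagonal d₂) := by
  simp only [IsDoublyStochastic, diagonal_mul_mul_diagonal_apply]
  refine ⟨fun i j => mul_nonneg (mul_nonneg (hd₁ i) (hC i j)) (hd₂ j), fun i => ?_, fun j => ?_⟩
  · simpa [mulVec, dotProduct, mul_sum, mul_assoc] using hrow i
  · simpa [vecMul, dotProduct, sum_mul] using hcol j

theorem exists_isDoublyStochastic_diagonal_mul_mul_diagonal (hC : ∀ i j, 0 < C i j) :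
    ∃ d₁ d₂ : Fin n → ℝ, (∀ i, 0 < d₁ i) ∧ (∀ j, 0 < d₂ j) ∧
      IsDoublyStochastic (diagonal d₁ * C * diagonal d₂) := by
  obtain ⟨y, hy, hmax⟩ := exists_forall_sinkhornPotential_le hC
  have hCy i : 0 < (C *ᵥ y) i := mulVec_pos_of_pos hC (fun j => (hy j).le) ⟨i, hy i⟩ i
  refine ⟨(C *ᵥ y)⁻¹, y, fun i => inv_pos.2 (hCy i), hy, ?_⟩
  exact isDoublyStochastic_diagonal_mul_mul_diagonal (fun i => (inv_pos.2 (hCy i)).le)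
    (fun i j => (hC i j).le) (fun j => (hy j).le) (fun i => inv_mul_cancel₀ (hCy i).ne')
    (vecMul_inv_mulVec_mul_eq_one hC hy hmax)

theorem IsDoublyStochastic.exists_eq_const_of_diagonal_mul_mul_diagonal
    {Q : Matrix (Fin n) (Fin n) ℝ} (hQ : IsDoublyStochastic Q) (hQpos : ∀ i j, 0 < Q i j)
    {r s : Fin n → ℝ} (hr : ∀ i, 0 < r i) (hs : ∀ j, 0 < s j)
    (hP : IsDoublyStochastic (diagonal r * Q * diagonal s)) :
    ∃ α : ℝ, 0 < α ∧ (∀ i, r i = α) ∧ ∀ j, α * s j = 1 := by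
  obtain hn | hn := isEmpty_or_nonempty (Fin n)
  · exact ⟨1, one_pos, isEmptyElim, isEmptyElim⟩
  obtain ⟨-, hrow, hcol⟩ := hP
  simp only [diagonal_mul_mul_diagonal_apply] at hrow hcol
  obtain ⟨i₀, -, hi₀⟩ := exists_max_image univ r univ_nonempty
  obtain ⟨j₀, -, hj₀⟩ := exists_min_image univ s univ_nonempty
  have hsum_row i : ∑ j, r i * Q i j * s j₀ = r i * s j₀ := by
    rw [← sum_mul, ← mul_sum, hQ.2.1 i, mul_one]
  have hle : ∀ j ∈ univ, r i₀ * Q i₀ j * s j₀ ≤ r i₀ * Q i₀ j * s j := fun j hj =>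
    mul_le_mul_of_nonneg_left (hj₀ j hj) (mul_pos (hr i₀) (hQpos i₀ j)).le
  have hprod : r i₀ * s j₀ = 1 := by
    refine le_antisymm (hsum_row i₀ ▸ hrow i₀ ▸ sum_le_sum hle) ?_
    calc 1 = ∑ i, r i * Q i j₀ * s j₀ := (hcol j₀).symm
      _ ≤ ∑ i, r i₀ * Q i j₀ * s j₀ := sum_le_sum fun i hi =>
          mul_le_mul_of_nonneg_right (mul_le_mul_of_nonneg_right (hi₀ i hi) (hQpos i j₀).le)
            (hs j₀).le
      _ = r i₀ * s j₀ := by rw [← sum_mul, ← mul_sum, hQ.2.2 j₀, mul_one]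
  have hs_const j : s j = s j₀ := by
    have heq := (sum_eq_sum_iff_of_le hle).1 (by rw [hsum_row, hprod, hrow]) j (mem_univ j)
    exact (mul_left_cancel₀ (mul_pos (hr i₀) (hQpos i₀ j)).ne' heq).symm
  refine ⟨r i₀, hr i₀, fun i => mul_right_cancel₀ (hs j₀).ne' ?_, fun j => hs_const j ▸ hprod⟩
  rw [hprod, ← hsum_row, ← hrow i]
  exact sum_congr rfl fun j _ => by rw [hs_const j]

theorem exists_eq_smul_of_isDoublyStochastic_diagonal_mul_mul_diagonal
    (hC : ∀ i j, 0 < C i j) {d₁ d₂ e₁ e₂ : Fin n → ℝ} (hd₁ : ∀ i, 0 < d₁ i)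
    (hd₂ : ∀ j, 0 < d₂ j) (he₁ : ∀ i, 0 < e₁ i) (he₂ : ∀ j, 0 < e₂ j)
    (hd : IsDoublyStochastic (diagonal d₁ * C * diagonal d₂))
    (he : IsDoublyStochastic (diagonal e₁ * C * diagonal e₂)) :
    ∃ α : ℝ, 0 < α ∧ (∀ i, d₁ i = α * e₁ i) ∧ ∀ j, α * d₂ j = e₂ j := by
  have hrescale : diagonal (d₁ / e₁) * (diagonal e₁ * C * diagonal e₂) * diagonal (d₂ / e₂) =
      diagonal d₁ * C * diagonal d₂ := by
    ext i j
    simp only [diagonal_mul_mul_diagonal_apply, Pi.div_apply]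
    field_simp [(he₁ i).ne', (he₂ j).ne']
  have hQpos i j : 0 < (diagonal e₁ * C * diagonal e₂) i j := by
    rw [diagonal_mul_mul_diagonal_apply]
    exact mul_pos (mul_pos (he₁ i) (hC i j)) (he₂ j)
  obtain ⟨α, hα, hr, hs⟩ := he.exists_eq_const_of_diagonal_mul_mul_diagonal hQpos
    (fun i => div_pos (hd₁ i) (he₁ i)) (fun j => div_pos (hd₂ j) (he₂ j)) (hrescale ▸ hd)
  refine ⟨α, hα, fun i => (div_eq_iff (he₁ i).ne').1 (hr i), fun j => ?_⟩
  rw [← div_eq_one_iff_eq (he₂ j).ne', mul_div_assoc]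
  exact hs j

end Scaling

/-- Sinkhorn's theorem: a strictly positive matrix C can be
scaled by positive diagonal matrices to a doubly stochastic matrix; the doubly
stochastic matrix of this form is unique, and the diagonal scalings are unique
up to a scalar factor. -/
theorem sinkhorn (n : ℕ) (C : Matrix (Fin n) (Fin n) ℝ)
    (hCpos : ∀ i j, 0 < C i j) :
    ∃ d₁ d₂ : Fin n → ℝ, (∀ i, 0 < d₁ i) ∧ (∀ i, 0 < d₂ i) ∧
      IsDoublyStochastic (Matrix.diagonal d₁ * C * Matrix.diagonal d₂) ∧
      ∀ e₁ e₂ : Fin n → ℝ, (∀ i, 0 < e₁ i) → (∀ i, 0 < e₂ i) →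
        IsDoublyStochastic (Matrix.diagonal e₁ * C * Matrix.diagonal e₂) →
        (Matrix.diagonal e₁ * C * Matrix.diagonal e₂
          = Matrix.diagonal d₁ * C * Matrix.diagonal d₂) ∧
        ∃ α : ℝ, 0 < α ∧ (∀ i, d₁ i = α * e₁ i) ∧ (∀ i, α * d₂ i = e₂ i) := by
  obtain ⟨d₁, d₂, hd₁, hd₂, hd⟩ := exists_isDoublyStochastic_diagonal_mul_mul_diagonal hCpos
  refine ⟨d₁, d₂, hd₁, hd₂, hd, fun e₁ e₂ he₁ he₂ he => ?_⟩
  obtain ⟨α, hα, h₁, h₂⟩ :=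
    exists_eq_smul_of_isDoublyStochastic_diagonal_mul_mul_diagonal hCpos hd₁ hd₂ he₁ he₂ hd he
  refine ⟨?_, α, hα, h₁, h₂⟩
  ext i j
  simp only [diagonal_mul_mul_diagonal_apply, h₁, ← h₂]
  ring
end

section
/- Let C be an n×n matrix with strictly positive entries, and let r, c ∈ ℝⁿ be strictly positive vectors with rᵀe = cᵀe. Then there exist diagonal matrices D₁ and D₂ with strictly positive diagonal entries such that P = D₁ C D₂ satisfies Pe = r and Pᵀe = c, and such P is unique. Moreover, D₁ and D₂ are unique up to a scalar factor: if D̃₁, D̃₂ are positive diagonal matrices with D̃₁ C D̃₂ having row sums r and column sums c, then there is α > 0 with D₁ = α D̃₁ and α D₂ = D̃₂. -/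
/-!
Uniqueness: if `d₁ C d₂` and `e₁ C e₂` have the same margins, write the entries of the second as
`Pᵢⱼ aᵢ bⱼ` with `P = d₁ C d₂`. For `j₀` maximising `b`, the row equations give `aᵢ b_{j₀} ≥ 1`;
column `j₀` is then a weighted average of these numbers equal to `1`, so `aᵢ b_{j₀} = 1`, and the
row equations become weighted averages forcing `bⱼ = b_{j₀}`.

Existence: the potential `G u = ∑ᵢ rᵢ log (C u)ᵢ - ∑ⱼ cⱼ log uⱼ` is invariant under positive
rescaling of `u` (as `∑ r = ∑ c`), and tends to `+∞` at the boundary of the simplex. So it has a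
minimiser in the interior of the simplex, which is a local minimiser in the whole orthant, and
its partial derivatives vanish there: `∑ᵢ rᵢ Cᵢₖ / (C u)ᵢ = cₖ / uₖ`. Then `d₂ = u` and
`d₁ = r / (C u)` solve the problem.
-/

open Matrix Finset Real Filter Topology

namespace MatrixScaling

variable {ι κ : Type*} [Fintype κ]

section

variable [Fintype ι]

lemma mul_eq_one_of_weighted_sums_eq [Nonempty κ] {P : Matrix ι κ ℝ}
    (hP : ∀ i j, 0 < P i j) {a : ι → ℝ} {b : κ → ℝ} (ha : ∀ i, 0 ≤ a i)
    (hrow : ∀ i, ∑ j, P i j * (a i * b j) = ∑ j, P i j)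
    (hcol : ∀ j, ∑ i, P i j * (a i * b j) = ∑ i, P i j) :
    ∀ i j, a i * b j = 1 := by
  obtain ⟨j₀, hj₀⟩ := Finite.exists_max b
  have hb_le : ∀ i j, a i * b j ≤ a i * b j₀ := fun i j =>
    mul_le_mul_of_nonneg_left (hj₀ j) (ha i)
  have one_le : ∀ i, 1 ≤ a i * b j₀ := by
    intro i
    refine le_of_mul_le_mul_left ?_ (sum_pos (fun j _ => hP i j) univ_nonempty)
    calc (∑ j, P i j) * 1 = ∑ j, P i j * (a i * b j) := by rw [mul_one, hrow]
      _ ≤ ∑ j, P i j * (a i * b j₀) :=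
          sum_le_sum fun j _ => mul_le_mul_of_nonneg_left (hb_le i j) (hP i j).le
      _ = (∑ j, P i j) * (a i * b j₀) := by rw [sum_mul]
  have eq_one : ∀ i, a i * b j₀ = 1 := by
    have h := (sum_eq_sum_iff_of_le fun i _ =>
      le_mul_of_one_le_right (hP i j₀).le (one_le i)).1 (hcol j₀).symm
    exact fun i => (mul_eq_left₀ (hP i j₀).ne').1 (h i (mem_univ i)).symm
  intro i j
  have h := (sum_eq_sum_iff_of_le fun j _ =>
    mul_le_of_le_one_right (hP i j).le ((hb_le i j).trans (eq_one i).le)).1 (hrow i)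
  exact (mul_eq_left₀ (hP i j).ne').1 (h j (mem_univ j))

theorem scaling_unique [Nonempty ι] [Nonempty κ] {C : Matrix ι κ ℝ} (hC : ∀ i j, 0 < C i j)
    {d₁ e₁ : ι → ℝ} {d₂ e₂ : κ → ℝ} (hd₁ : ∀ i, 0 < d₁ i) (hd₂ : ∀ j, 0 < d₂ j)
    (he₁ : ∀ i, 0 ≤ e₁ i)
    (hrow : ∀ i, ∑ j, e₁ i * C i j * e₂ j = ∑ j, d₁ i * C i j * d₂ j)
    (hcol : ∀ j, ∑ i, e₁ i * C i j * e₂ j = ∑ i, d₁ i * C i j * d₂ j) :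
    ∃ α, 0 < α ∧ (∀ i, d₁ i = α * e₁ i) ∧ ∀ j, α * d₂ j = e₂ j := by
  set a : ι → ℝ := fun i => e₁ i / d₁ i
  set b : κ → ℝ := fun j => e₂ j / d₂ j
  have hentry : ∀ i j, e₁ i * C i j * e₂ j = d₁ i * C i j * d₂ j * (a i * b j) := by
    intro i j
    simp only [a, b]
    field_simp [(hd₁ i).ne', (hd₂ j).ne']
  have hab := mul_eq_one_of_weighted_sums_eq (P := fun i j => d₁ i * C i j * d₂ j)
    (fun i j => mul_pos (mul_pos (hd₁ i) (hC i j)) (hd₂ j)) (fun i => div_nonneg (he₁ i) (hd₁ i).le)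
    (fun i => by simpa only [hentry] using hrow i) (fun j => by simpa only [hentry] using hcol j)
  obtain ⟨i₀⟩ := ‹Nonempty ι›
  obtain ⟨j₀⟩ := ‹Nonempty κ›
  refine ⟨b j₀, ?_, fun i => ?_, fun j => ?_⟩
  · exact pos_of_mul_pos_right (hab i₀ j₀ ▸ one_pos) (div_nonneg (he₁ i₀) (hd₁ i₀).le)
  · have h := hab i j₀
    rw [div_mul_eq_mul_div, div_eq_one_iff_eq (hd₁ i).ne'] at h
    rw [← h, mul_comm]
  · have h : b j = b j₀ :=
      mul_left_cancel₀ (left_ne_zero_of_mul_eq_one (hab i₀ j₀)) ((hab i₀ j).trans (hab i₀ j₀).symm)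
    exact (eq_div_iff (hd₂ j).ne').1 h.symm

end

lemma mulVec_apply_pos [Nonempty κ] (hC : ∀ i j, 0 < C i j) {u : κ → ℝ} (hu : ∀ j, 0 < u j)
    (i : ι) : 0 < (C *ᵥ u) i :=
  sum_pos (fun j _ => mul_pos (hC i j) (hu j)) univ_nonempty

lemma isLocalMin_of_isMinOn_stdSimplex_inter_Ici [Nonempty κ] {F : (κ → ℝ) → ℝ}
    (hF : ∀ t : ℝ, 0 < t → ∀ v : κ → ℝ, (∀ j, 0 < v j) → F (t • v) = F v)
    {ε : ℝ} (hε : 0 ≤ ε) {u : κ → ℝ} (hu : u ∈ stdSimplex ℝ κ) (hεu : ∀ j, ε < u j)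
    (hmin : IsMinOn F (stdSimplex ℝ κ ∩ Set.Ici (fun _ => ε)) u) : IsLocalMin F u := by
  set U : Set (κ → ℝ) := {v | ∀ j, 0 < v j ∧ ε * ∑ k, v k < v j}
  have hU_open : IsOpen U := by
    simp only [U, Set.ofPred_forall]
    exact isOpen_iInter_of_finite fun j =>
      (isOpen_lt continuous_const (continuous_apply j)).inter
        (isOpen_lt (by fun_prop) (continuous_apply j))
  have huU : u ∈ U := fun j => ⟨hε.trans_lt (hεu j), by rw [hu.2, mul_one]; exact hεu j⟩
  refine IsMinOn.isLocalMin (s := U) (fun v hv => ?_) (hU_open.mem_nhds huU)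
  have hs : 0 < ∑ k, v k := sum_pos (fun k _ => (hv k).1) univ_nonempty
  have hvK : (∑ k, v k)⁻¹ • v ∈ stdSimplex ℝ κ ∩ Set.Ici (fun _ => ε) := by
    refine ⟨⟨fun j => ?_, ?_⟩, fun j => ?_⟩
    · simp only [Pi.smul_apply, smul_eq_mul]
      exact mul_nonneg (inv_nonneg.2 hs.le) (hv j).1.le
    · simp only [Pi.smul_apply, smul_eq_mul, ← mul_sum, inv_mul_cancel₀ hs.ne']
    · simp only [Pi.smul_apply, smul_eq_mul, ← div_eq_inv_mul]
      exact (le_div_iff₀ hs).2 (hv j).2.le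
  rw [Set.mem_ofPred_eq, ← hF _ (inv_pos.2 hs) v fun j => (hv j).1]
  exact hmin hvK

lemma exists_pos_forall_le_neg_mul_log {c : κ → ℝ} (hc : ∀ k, 0 < c k) (L : ℝ) {b : ℝ}
    (hb : 0 < b) : ∃ ε, 0 < ε ∧ ε < b ∧ ∀ x, 0 < x → x ≤ ε → ∀ k, L ≤ -(c k * log x) := by
  have h : ∀ᶠ x in 𝓝[>] 0, x < b ∧ ∀ k, L ≤ -(c k * log x) :=
    (eventually_nhdsWithin_of_eventually_nhds (eventually_lt_nhds hb)).and
      (eventually_all.2 fun k => (tendsto_neg_atBot_atTop.comp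
        (tendsto_log_nhdsGT_zero.const_mul_atBot (hc k))).eventually_ge_atTop L)
  obtain ⟨ε, hε, hεh⟩ := mem_nhdsGT_iff_exists_Ioc_subset.1 h
  exact ⟨ε, hε, (hεh ⟨hε, le_rfl⟩).1, fun x hx hxε => (hεh ⟨hx, hxε⟩).2⟩

section

variable [Fintype ι]

noncomputable def potential (C : Matrix ι κ ℝ) (r : ι → ℝ) (c : κ → ℝ) (u : κ → ℝ) : ℝ :=
  ∑ i, r i * log ((C *ᵥ u) i) - ∑ j, c j * log (u j)

variable {C : Matrix ι κ ℝ} {r : ι → ℝ} {c : κ → ℝ}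

lemma potential_smul (hrc : ∑ i, r i = ∑ j, c j) {u : κ → ℝ} (hCu : ∀ i, (C *ᵥ u) i ≠ 0)
    (hu : ∀ j, u j ≠ 0) {t : ℝ} (ht : t ≠ 0) : potential C r c (t • u) = potential C r c u := by
  have hlog : ∀ i, log ((C *ᵥ t • u) i) = log t + log ((C *ᵥ u) i) := fun i => by
    rw [mulVec_smul, Pi.smul_apply, smul_eq_mul, log_mul ht (hCu i)]
  simp only [potential, hlog, Pi.smul_apply, smul_eq_mul, log_mul ht (hu _), mul_add,
    sum_add_distrib, ← sum_mul, hrc]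
  ring

lemma hasDerivAt_potential_add_smul {u : κ → ℝ} (hCu : ∀ i, (C *ᵥ u) i ≠ 0)
    (hu : ∀ j, u j ≠ 0) (v : κ → ℝ) :
    HasDerivAt (fun t : ℝ => potential C r c (u + t • v))
      (∑ i, r i * (C *ᵥ v) i / (C *ᵥ u) i - ∑ j, c j * v j / u j) 0 := by
  have hlog : ∀ a b : ℝ, a ≠ 0 → HasDerivAt (fun t => log (a + t * b)) (b / a) 0 := by
    intro a b ha
    simpa using (((hasDerivAt_id (0 : ℝ)).mul_const b).const_add a).log (by simpa using ha)
  simp only [potential, mulVec_add, mulVec_smul, Pi.add_apply, Pi.smul_apply, smul_eq_mul,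
    mul_div_assoc]
  exact (HasDerivAt.fun_sum fun i _ => (hlog _ _ (hCu i)).const_mul (r i)).sub
    (HasDerivAt.fun_sum fun j _ => (hlog _ _ (hu j)).const_mul (c j))

lemma sum_div_eq_sum_div_of_isLocalMin {u : κ → ℝ} (hmin : IsLocalMin (potential C r c) u)
    (hCu : ∀ i, (C *ᵥ u) i ≠ 0) (hu : ∀ j, u j ≠ 0) (v : κ → ℝ) :
    ∑ i, r i * (C *ᵥ v) i / (C *ᵥ u) i = ∑ j, c j * v j / u j := by
  have hmin' : IsLocalMin (potential C r c) ((fun t : ℝ => u + t • v) 0) := by simpa using hmin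
  have hline := hmin'.comp_continuous (g := fun t : ℝ => u + t • v) (by fun_prop)
  exact sub_eq_zero.1 (hline.hasDerivAt_eq_zero (hasDerivAt_potential_add_smul hCu hu v))

lemma continuousOn_potential [Nonempty κ] (hC : ∀ i j, 0 < C i j) :
    ContinuousOn (potential C r c) {u | ∀ j, 0 < u j} := by
  refine ContinuousOn.sub (continuousOn_finsetSum _ fun i _ => ?_)
    (continuousOn_finsetSum _ fun j _ => ?_)
  · exact continuousOn_const.mul (ContinuousOn.log (by fun_prop)
      fun u hu => (mulVec_apply_pos hC hu i).ne')
  · exact continuousOn_const.mul (ContinuousOn.log (by fun_prop) fun u hu => (hu j).ne')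

lemma le_potential {m : ℝ} (hm : 0 < m) (hmC : ∀ i j, m ≤ C i j) (hr : ∀ i, 0 ≤ r i)
    (hc : ∀ j, 0 ≤ c j) {w : κ → ℝ} (hw : w ∈ stdSimplex ℝ κ) (k : κ) :
    (∑ i, r i) * log m - c k * log (w k) ≤ potential C r c w := by
  have hmCw : ∀ i, m ≤ (C *ᵥ w) i := fun i =>
    calc m = ∑ j, m * w j := by rw [← mul_sum, hw.2, mul_one]
      _ ≤ (C *ᵥ w) i := sum_le_sum fun j _ => mul_le_mul_of_nonneg_right (hmC i j) (hw.1 j)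
  have hrows : (∑ i, r i) * log m ≤ ∑ i, r i * log ((C *ᵥ w) i) := by
    rw [sum_mul]
    exact sum_le_sum fun i _ =>
      mul_le_mul_of_nonneg_left (log_le_log hm (hmCw i)) (hr i)
  have hcols : -(c k * log (w k)) ≤ -∑ j, c j * log (w j) := by
    rw [← sum_neg_distrib]
    exact single_le_sum (f := fun j => -(c j * log (w j))) (fun j _ => neg_nonneg.2
      (mul_nonpos_of_nonneg_of_nonpos (hc j)
        (log_nonpos (hw.1 j) (mem_Icc_of_mem_stdSimplex hw j).2))) (mem_univ k)
  unfold potential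
  linarith

theorem exists_isLocalMin_potential [Nonempty ι] [Nonempty κ] (hC : ∀ i j, 0 < C i j)
    (hr : ∀ i, 0 ≤ r i) (hc : ∀ j, 0 < c j) (hrc : ∑ i, r i = ∑ j, c j) :
    ∃ u, (∀ j, 0 < u j) ∧ IsLocalMin (potential C r c) u := by
  obtain ⟨p, hp⟩ := Finite.exists_min fun p : ι × κ => C p.1 p.2
  set u₀ : κ → ℝ := fun _ => (Fintype.card κ : ℝ)⁻¹
  have hu₀ : u₀ ∈ stdSimplex ℝ κ := ⟨fun _ => by positivity, by simp [u₀]⟩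
  obtain ⟨ε, hε, hεu₀, hεlog⟩ := exists_pos_forall_le_neg_mul_log hc
    (potential C r c u₀ + 1 - (∑ i, r i) * log (C p.1 p.2)) (b := (Fintype.card κ : ℝ)⁻¹)
    (by positivity)
  set K := stdSimplex ℝ κ ∩ Set.Ici (fun _ : κ => ε)
  have hKpos : ∀ u ∈ K, ∀ j, 0 < u j := fun u hu j => hε.trans_le (hu.2 j)
  obtain ⟨u, huK, hmin⟩ := ((isCompact_stdSimplex ℝ κ).inter_right isClosed_Ici).exists_isMinOn
    ⟨u₀, hu₀, fun _ => hεu₀.le⟩ ((continuousOn_potential hC).mono hKpos)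
  -- Near the boundary the potential exceeds its value at the barycentre `u₀`.
  have hεu : ∀ j, ε < u j := by
    intro j
    by_contra! hj
    have := le_potential (hC p.1 p.2) (fun i j => hp (i, j)) hr (fun j => (hc j).le) huK.1 j
    have := hεlog (u j) (hKpos u huK j) hj j
    have := hmin ⟨hu₀, fun _ => hεu₀.le⟩
    simp only [Set.mem_ofPred_eq] at this
    linarith
  refine ⟨u, hKpos u huK, isLocalMin_of_isMinOn_stdSimplex_inter_Ici (fun t ht v hv => ?_)
    hε.le huK.1 hεu hmin⟩
  exact potential_smul hrc (fun i => (mulVec_apply_pos hC hv i).ne') (fun j => (hv j).ne') ht.ne'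

theorem exists_scaling [Nonempty ι] [Nonempty κ] (hC : ∀ i j, 0 < C i j)
    (hr : ∀ i, 0 < r i) (hc : ∀ j, 0 < c j) (hrc : ∑ i, r i = ∑ j, c j) :
    ∃ (d₁ : ι → ℝ) (d₂ : κ → ℝ), (∀ i, 0 < d₁ i) ∧ (∀ j, 0 < d₂ j) ∧
      (∀ i, ∑ j, d₁ i * C i j * d₂ j = r i) ∧ ∀ j, ∑ i, d₁ i * C i j * d₂ j = c j := by
  obtain ⟨u, hu, hmin⟩ := exists_isLocalMin_potential hC (fun i => (hr i).le) hc hrc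
  have hCu := mulVec_apply_pos hC hu
  refine ⟨fun i => r i / (C *ᵥ u) i, u, fun i => div_pos (hr i) (hCu i), hu, fun i => ?_,
    fun k => ?_⟩
  · simp only [mul_assoc, ← mul_sum]
    exact div_mul_cancel₀ _ (hCu i).ne'
  · classical
    have h := sum_div_eq_sum_div_of_isLocalMin hmin (fun i => (hCu i).ne') (fun j => (hu j).ne')
      (Pi.single k 1)
    simp only [mulVec_single_one, col_apply, Pi.single_apply, mul_ite, mul_one, mul_zero,
      ite_div, zero_div, sum_ite_eq', mem_univ, if_true] at h
    calc ∑ i, r i / (C *ᵥ u) i * C i k * u k = (∑ i, r i * C i k / (C *ᵥ u) i) * u k := by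
          rw [sum_mul]; congr! 1 with i; ring
      _ = c k := by rw [h, div_mul_cancel₀ _ (hu k).ne']

end

end MatrixScaling

/-- matrix scaling: a strictly positive matrix C can be scaled
by positive diagonal matrices to attain prescribed positive row sums r and
column sums c with rᵀe = cᵀe; the scaled matrix is unique, and the diagonal
scalings are unique up to a scalar factor. -/
theorem matrix_scaling (n : ℕ) (C : Matrix (Fin n) (Fin n) ℝ)
    (hCpos : ∀ i j, 0 < C i j)
    (r c : Fin n → ℝ) (hr : ∀ i, 0 < r i) (hc : ∀ j, 0 < c j)
    (hrc : ∑ i, r i = ∑ j, c j) :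
    ∃ d₁ d₂ : Fin n → ℝ, (∀ i, 0 < d₁ i) ∧ (∀ i, 0 < d₂ i) ∧
      (∀ i, ∑ j, (Matrix.diagonal d₁ * C * Matrix.diagonal d₂) i j = r i) ∧
      (∀ j, ∑ i, (Matrix.diagonal d₁ * C * Matrix.diagonal d₂) i j = c j) ∧
      ∀ e₁ e₂ : Fin n → ℝ, (∀ i, 0 < e₁ i) → (∀ i, 0 < e₂ i) →
        (∀ i, ∑ j, (Matrix.diagonal e₁ * C * Matrix.diagonal e₂) i j = r i) →
        (∀ j, ∑ i, (Matrix.diagonal e₁ * C * Matrix.diagonal e₂) i j = c j) →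
        (Matrix.diagonal e₁ * C * Matrix.diagonal e₂
          = Matrix.diagonal d₁ * C * Matrix.diagonal d₂) ∧
        ∃ α : ℝ, 0 < α ∧ (∀ i, d₁ i = α * e₁ i) ∧ (∀ i, α * d₂ i = e₂ i) := by
  simp only [mul_diagonal, diagonal_mul]
  rcases isEmpty_or_nonempty (Fin n) with _ | _
  · exact ⟨1, 1, isEmptyElim, isEmptyElim, isEmptyElim, isEmptyElim,
      fun _ _ _ _ _ _ => ⟨Subsingleton.elim _ _, 1, one_pos, isEmptyElim, isEmptyElim⟩⟩
  obtain ⟨d₁, d₂, hd₁, hd₂, hrow, hcol⟩ := MatrixScaling.exists_scaling hCpos hr hc hrc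
  refine ⟨d₁, d₂, hd₁, hd₂, hrow, hcol, fun e₁ e₂ he₁ _ herow hecol => ?_⟩
  obtain ⟨α, hα, h₁, h₂⟩ := MatrixScaling.scaling_unique hCpos hd₁ hd₂ (fun i => (he₁ i).le)
    (fun i => (herow i).trans (hrow i).symm) (fun j => (hecol j).trans (hcol j).symm)
  refine ⟨?_, α, hα, h₁, h₂⟩
  ext i j
  simp only [mul_diagonal, diagonal_mul, h₁, ← h₂]
  ring
end

section
/- Let f̂ : [0,1]² → ℝ be any bounded, continuous, strictly positive, symmetric function (in particular, any kernel density estimate built from finitely many sample points using a strictly positive kernel such as the Gaussian). Then there exists a unique strictly positive continuous function ĥ on [0,1] such that ∫₀¹ ĥ(x) f̂(x,y) ĥ(y) dx = 1 for all y ∈ [0,1], and the iteration g⁽⁰⁾ ≡ 1, g⁽ᵗ⁺¹⁾(x) = √( g⁽ᵗ⁾(x) / ∫₀¹ f̂(x,y) g⁽ᵗ⁾(y) dy ) converges uniformly on [0,1] to ĥ. -/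
/-!
Write `F g x = ∫₀¹ K(x,y) g(y) dy` and `T g = √(g / F g)`, so that a positive `h` is a fixed
point of `T` iff `h · F h = 1`, which by symmetry of the kernel is the balancing equation.
If `m ≤ K ≤ M` and `α g' ≤ g ≤ β g'`, then `F g / F g'` lies in a subinterval `[α₁, β₁]` of
`[α, β]` of length `(1 - m/M)(β - α)`, so `T g / T g'` lies in `[√(α/β₁), √(β/α₁)]`, and by
AM-GM the ratio `ρ = β/α` of the bounds improves to `1 + (1 - m/(2M))(ρ - 1)`.
Along the iteration this gives `|g_{t+p} - g_t| = O((1 - m/(2M))^t)` uniformly, hence uniform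
convergence to a fixed point of `T`. For two balancing functions, with `α`, `β` the extreme
values of their quotient, it forces `α = β`, and the balancing equation then forces `α = 1`.
-/

open MeasureTheory Filter Set Topology

namespace KernelSinkhorn

noncomputable def kernelOp (K : ℝ → ℝ → ℝ) (g : ℝ → ℝ) (x : ℝ) : ℝ :=
  ∫ y in (0:ℝ)..1, K x y * g y

noncomputable def sinkhornStep (K : ℝ → ℝ → ℝ) (g : ℝ → ℝ) (x : ℝ) : ℝ :=
  √(g x / kernelOp K g x)

noncomputable def sinkhornIter (K : ℝ → ℝ → ℝ) (t : ℕ) : ℝ → ℝ :=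
  (sinkhornStep K)^[t] 1

theorem sinkhornIter_succ (K : ℝ → ℝ → ℝ) (t : ℕ) :
    sinkhornIter K (t + 1) = sinkhornStep K (sinkhornIter K t) :=
  Function.iterate_succ_apply' _ _ _

def IsBalancing (K : ℝ → ℝ → ℝ) (h : ℝ → ℝ) : Prop :=
  ContinuousOn h (Icc 0 1) ∧ (∀ x ∈ Icc (0:ℝ) 1, 0 < h x) ∧
    ∀ x ∈ Icc (0:ℝ) 1, h x * kernelOp K h x = 1

-- Bounds on all of `ℝ²` keep the iterates globally continuous; a kernel given on the unit
-- square is extended by clamping in `exists_kernelBounds_eqOn`.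
structure KernelBounds (K : ℝ → ℝ → ℝ) (m M : ℝ) : Prop where
  continuous : Continuous (Function.uncurry K)
  pos : 0 < m
  lower : ∀ x y, m ≤ K x y
  upper : ∀ x y, K x y ≤ M

-- `log ρ` bounds Hilbert's projective distance from `u` to `v` on `[0, 1]`; the normalization
-- `α ≤ 1 ≤ β` turns this into `|u - v| ≤ (ρ - 1) v`.
def RatioPinched (u v : ℝ → ℝ) (ρ : ℝ) : Prop :=
  ∃ α β : ℝ, 0 < α ∧ α ≤ 1 ∧ 1 ≤ β ∧ β ≤ ρ * α ∧
    ∀ x ∈ Icc (0:ℝ) 1, α * v x ≤ u x ∧ u x ≤ β * v x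

theorem RatioPinched.mono {u v : ℝ → ℝ} {ρ ρ' : ℝ} (h : RatioPinched u v ρ) (hρ : ρ ≤ ρ') :
    RatioPinched u v ρ' := by
  obtain ⟨α, β, hα, hα1, hβ1, hβ, hbd⟩ := h
  exact ⟨α, β, hα, hα1, hβ1, hβ.trans (mul_le_mul_of_nonneg_right hρ hα.le), hbd⟩

theorem RatioPinched.abs_sub_le {u v : ℝ → ℝ} {ρ x : ℝ} (h : RatioPinched u v ρ)
    (hx : x ∈ Icc (0:ℝ) 1) (hv : 0 ≤ v x) : |u x - v x| ≤ (ρ - 1) * v x := by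
  obtain ⟨α, β, hα, hα1, hβ1, hβ, hbd⟩ := h
  obtain ⟨hlo, hhi⟩ := hbd x hx
  have hρα : β ≤ ρ := hβ.trans (by nlinarith)
  -- `1 - α ≤ ρ - 1` because `ρ ≥ 1 / α ≥ 2 - α`
  have hαρ : 1 - α ≤ ρ - 1 := by nlinarith [sq_nonneg (1 - α)]
  rw [abs_le]
  constructor <;> nlinarith

theorem sqrt_div_eq_self_iff {a b : ℝ} (ha : 0 < a) (hb : 0 < b) : √(a / b) = a ↔ a * b = 1 := by
  rw [Real.sqrt_eq_iff_mul_self_eq_of_pos ha, eq_div_iff hb.ne', mul_assoc, mul_eq_left₀ ha.ne']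

theorem UniformCauchySeqOn.exists_tendstoUniformlyOn {ι α β : Type*} [Nonempty ι]
    [SemilatticeSup ι] [UniformSpace β] [CompleteSpace β] [Nonempty β] {F : ι → α → β}
    {s : Set α} (hF : UniformCauchySeqOn F atTop s) :
    ∃ f, TendstoUniformlyOn F f atTop s :=
  ⟨fun x => limUnder atTop fun n => F n x,
    hF.tendstoUniformlyOn_of_tendsto fun _ hx => (hF.cauchySeq hx).tendsto_limUnder⟩

theorem sqrt_div_le_mul_sqrt_div {α β α₁ β₁ θ : ℝ} (hα : 0 < α) (hαβ : α ≤ β)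
    (hαα₁ : α ≤ α₁) (hα₁β₁ : α₁ ≤ β₁) (hθ : 0 ≤ θ) (hgap : β₁ - α₁ ≤ θ * (β - α)) :
    √(β / α₁) ≤ (1 + (1 + θ) / 2 * (β / α - 1)) * √(α / β₁) := by
  set ρ := β / α with hρ
  have hα₁ : 0 < α₁ := hα.trans_le hαα₁
  have hβ₁ : 0 < β₁ := hα₁.trans_le hα₁β₁
  have hρ1 : 1 ≤ ρ := (one_le_div hα).2 hαβ
  have hβ : β = ρ * α := by rw [hρ, div_mul_cancel₀ _ hα.ne']
  have hβ₁α₁ : β₁ ≤ α₁ * (1 + θ * (ρ - 1)) := by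
    rw [hβ] at hgap
    nlinarith [mul_le_mul_of_nonneg_right hαα₁ (mul_nonneg hθ (sub_nonneg.2 hρ1))]
  -- AM-GM: `ρ * s ≤ ((ρ + s) / 2) ^ 2` with `s = 1 + θ (ρ - 1)`
  have hamgm : ρ * (1 + θ * (ρ - 1)) ≤ (1 + (1 + θ) / 2 * (ρ - 1)) ^ 2 := by
    nlinarith [sq_nonneg (ρ - (1 + θ * (ρ - 1)))]
  have hR : 0 ≤ 1 + (1 + θ) / 2 * (ρ - 1) := by nlinarith
  rw [← Real.sqrt_sq hR, ← Real.sqrt_mul (sq_nonneg _)]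
  apply Real.sqrt_le_sqrt
  rw [div_le_iff₀ hα₁, mul_div_assoc', div_mul_eq_mul_div, le_div_iff₀ hβ₁, hβ]
  nlinarith [mul_le_mul_of_nonneg_left hβ₁α₁ (by positivity : 0 ≤ ρ * α),
    mul_le_mul_of_nonneg_right hamgm (by positivity : 0 ≤ α * α₁)]

theorem integral_pos_of_pos_on_Icc {g : ℝ → ℝ} (hg : ContinuousOn g (Icc 0 1))
    (hgpos : ∀ y ∈ Icc (0:ℝ) 1, 0 < g y) : 0 < ∫ y in (0:ℝ)..1, g y :=
  intervalIntegral.intervalIntegral_pos_of_pos_on (hg.intervalIntegrable_of_Icc zero_le_one)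
    (fun y hy => hgpos y (Ioo_subset_Icc_self hy)) zero_lt_one

theorem kernelOp_const_mul (K : ℝ → ℝ → ℝ) (a : ℝ) (g : ℝ → ℝ) (x : ℝ) :
    kernelOp K (fun y => a * g y) x = a * kernelOp K g x := by
  simp only [kernelOp, mul_left_comm _ a, intervalIntegral.integral_const_mul]

variable {K : ℝ → ℝ → ℝ} {m M : ℝ}

namespace KernelBounds

theorem lower_le_upper (hK : KernelBounds K m M) : m ≤ M :=
  (hK.lower 0 0).trans (hK.upper 0 0)

theorem upper_pos (hK : KernelBounds K m M) : 0 < M :=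
  hK.pos.trans_le hK.lower_le_upper

theorem one_sub_div_two_mul_nonneg (hK : KernelBounds K m M) : 0 ≤ 1 - m / (2 * M) := by
  rw [sub_nonneg, div_le_one (by linarith [hK.upper_pos])]
  linarith [hK.lower_le_upper, hK.upper_pos]

theorem one_sub_div_two_mul_lt_one (hK : KernelBounds K m M) : 1 - m / (2 * M) < 1 :=
  sub_lt_self 1 (div_pos hK.pos (mul_pos two_pos hK.upper_pos))

theorem sqrt_div_sq_pos (hK : KernelBounds K m M) : 0 < √(m / M ^ 2) :=
  Real.sqrt_pos.2 (div_pos hK.pos (pow_pos hK.upper_pos 2))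

theorem intervalIntegrable_mul (hK : KernelBounds K m M) {g : ℝ → ℝ}
    (hg : ContinuousOn g (Icc 0 1)) (x : ℝ) :
    IntervalIntegrable (fun y => K x y * g y) volume 0 1 :=
  ((hK.continuous.comp (Continuous.prodMk_right x)).continuousOn.mul hg).intervalIntegrable_of_Icc
    zero_le_one

theorem continuous_kernelOp (hK : KernelBounds K m M) {g : ℝ → ℝ} (hg : Continuous g) :
    Continuous (kernelOp K g) :=
  intervalIntegral.continuous_parametric_intervalIntegral_of_continuous'
    (hK.continuous.mul (hg.comp continuous_snd)) 0 1

theorem kernelOp_sub (hK : KernelBounds K m M) {g h : ℝ → ℝ}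
    (hg : ContinuousOn g (Icc 0 1)) (hh : ContinuousOn h (Icc 0 1)) (x : ℝ) :
    kernelOp K g x - kernelOp K h x = kernelOp K (fun y => g y - h y) x := by
  rw [kernelOp, kernelOp, kernelOp, ← intervalIntegral.integral_sub
    (hK.intervalIntegrable_mul hg x) (hK.intervalIntegrable_mul hh x)]
  simp only [mul_sub]

theorem mul_integral_le_kernelOp (hK : KernelBounds K m M) {g : ℝ → ℝ}
    (hg : ContinuousOn g (Icc 0 1)) (hg0 : ∀ y ∈ Icc (0:ℝ) 1, 0 ≤ g y) (x : ℝ) :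
    m * ∫ y in (0:ℝ)..1, g y ≤ kernelOp K g x := by
  rw [← intervalIntegral.integral_const_mul]
  exact intervalIntegral.integral_mono_on zero_le_one
    ((hg.intervalIntegrable_of_Icc zero_le_one).const_mul m) (hK.intervalIntegrable_mul hg x)
    fun y hy => mul_le_mul_of_nonneg_right (hK.lower x y) (hg0 y hy)

theorem kernelOp_le_mul_integral (hK : KernelBounds K m M) {g : ℝ → ℝ}
    (hg : ContinuousOn g (Icc 0 1)) (hg0 : ∀ y ∈ Icc (0:ℝ) 1, 0 ≤ g y) (x : ℝ) :
    kernelOp K g x ≤ M * ∫ y in (0:ℝ)..1, g y := by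
  rw [← intervalIntegral.integral_const_mul]
  exact intervalIntegral.integral_mono_on zero_le_one (hK.intervalIntegrable_mul hg x)
    ((hg.intervalIntegrable_of_Icc zero_le_one).const_mul M)
    fun y hy => mul_le_mul_of_nonneg_right (hK.upper x y) (hg0 y hy)

theorem kernelOp_pos (hK : KernelBounds K m M) {g : ℝ → ℝ} (hg : ContinuousOn g (Icc 0 1))
    (hgpos : ∀ y ∈ Icc (0:ℝ) 1, 0 < g y) (x : ℝ) : 0 < kernelOp K g x :=
  (mul_pos hK.pos (integral_pos_of_pos_on_Icc hg hgpos)).trans_le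
    (hK.mul_integral_le_kernelOp hg (fun y hy => (hgpos y hy).le) x)

theorem mul_integral_sub_le_kernelOp_sub (hK : KernelBounds K m M) {g h : ℝ → ℝ}
    (hg : ContinuousOn g (Icc 0 1)) (hh : ContinuousOn h (Icc 0 1))
    (hhg : ∀ y ∈ Icc (0:ℝ) 1, h y ≤ g y) (x : ℝ) :
    m * ∫ y in (0:ℝ)..1, (g y - h y) ≤ kernelOp K g x - kernelOp K h x := by
  rw [hK.kernelOp_sub hg hh]
  exact hK.mul_integral_le_kernelOp (hg.sub hh) (fun y hy => sub_nonneg.2 (hhg y hy)) x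

theorem abs_kernelOp_sub_le (hK : KernelBounds K m M) {g h : ℝ → ℝ}
    (hg : ContinuousOn g (Icc 0 1)) (hh : ContinuousOn h (Icc 0 1)) {ε : ℝ}
    (hgh : ∀ y ∈ Icc (0:ℝ) 1, |g y - h y| ≤ ε) (x : ℝ) :
    |kernelOp K g x - kernelOp K h x| ≤ M * ε := by
  rw [hK.kernelOp_sub hg hh, kernelOp]
  calc |∫ y in (0:ℝ)..1, K x y * (g y - h y)|
      ≤ ∫ y in (0:ℝ)..1, |K x y * (g y - h y)| :=
        intervalIntegral.abs_integral_le_integral_abs zero_le_one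
    _ ≤ ∫ _ in (0:ℝ)..1, M * ε := by
        refine intervalIntegral.integral_mono_on zero_le_one
          (hK.intervalIntegrable_mul (hg.sub hh) x).abs intervalIntegrable_const fun y hy => ?_
        rw [abs_mul, abs_of_pos (hK.pos.trans_le (hK.lower x y))]
        exact mul_le_mul (hK.upper x y) (hgh y hy) (abs_nonneg _) hK.upper_pos.le
    _ = M * ε := by simp

theorem continuous_sinkhornStep (hK : KernelBounds K m M) {g : ℝ → ℝ} (hg : Continuous g)
    (hgpos : ∀ y ∈ Icc (0:ℝ) 1, 0 < g y) : Continuous (sinkhornStep K g) :=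
  (hg.div (hK.continuous_kernelOp hg)
    fun x => (hK.kernelOp_pos hg.continuousOn hgpos x).ne').sqrt

theorem exists_ratio_bounds_kernelOp (hK : KernelBounds K m M) {g g' : ℝ → ℝ}
    (hg : ContinuousOn g (Icc 0 1)) (hg' : ContinuousOn g' (Icc 0 1))
    (hg'pos : ∀ y ∈ Icc (0:ℝ) 1, 0 < g' y) {α β : ℝ}
    (hlo : ∀ y ∈ Icc (0:ℝ) 1, α * g' y ≤ g y) (hhi : ∀ y ∈ Icc (0:ℝ) 1, g y ≤ β * g' y) :
    ∃ α₁ β₁, α ≤ α₁ ∧ α₁ ≤ β₁ ∧ β₁ ≤ β ∧ β₁ - α₁ = (1 - m / M) * (β - α) ∧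
      ∀ x, α₁ * kernelOp K g' x ≤ kernelOp K g x ∧ kernelOp K g x ≤ β₁ * kernelOp K g' x := by
  have hαg' : ContinuousOn (fun y => α * g' y) (Icc 0 1) := continuousOn_const.mul hg'
  have hβg' : ContinuousOn (fun y => β * g' y) (Icc 0 1) := continuousOn_const.mul hg'
  have hI' := integral_pos_of_pos_on_Icc hg' hg'pos
  set I' := ∫ y in (0:ℝ)..1, g' y
  set s := ∫ y in (0:ℝ)..1, (g y - α * g' y)
  set s' := ∫ y in (0:ℝ)..1, (β * g' y - g y)
  set c := m / (M * I')
  have hc : 0 ≤ c := by have := hK.pos; have := hK.upper_pos; positivity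
  have hs : 0 ≤ s :=
    intervalIntegral.integral_nonneg zero_le_one fun y hy => sub_nonneg.2 (hlo y hy)
  have hs' : 0 ≤ s' :=
    intervalIntegral.integral_nonneg zero_le_one fun y hy => sub_nonneg.2 (hhi y hy)
  have hss' : s + s' = (β - α) * I' := by
    have h₁ : IntervalIntegrable (fun y => g y - α * g' y) volume 0 1 :=
      (hg.sub hαg').intervalIntegrable_of_Icc zero_le_one
    have h₂ : IntervalIntegrable (fun y => β * g' y - g y) volume 0 1 :=
      (hβg'.sub hg).intervalIntegrable_of_Icc zero_le_one
    rw [← intervalIntegral.integral_add h₁ h₂, ← intervalIntegral.integral_const_mul]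
    congr 1 with y
    ring
  have hcI' : c * I' = m / M := by
    rw [div_mul_eq_mul_div, mul_div_mul_right _ _ hI'.ne']
  have hcF : ∀ x, c * kernelOp K g' x ≤ m := fun x =>
    calc c * kernelOp K g' x ≤ c * (M * I') :=
          mul_le_mul_of_nonneg_left (hK.kernelOp_le_mul_integral hg'
            (fun y hy => (hg'pos y hy).le) x) hc
      _ = m := div_mul_cancel₀ _ (by have := hK.upper_pos; positivity)
  have hαβ : α ≤ β := le_of_mul_le_mul_right ((hlo 0 (by simp)).trans (hhi 0 (by simp)))
    (hg'pos 0 (by simp))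
  refine ⟨α + c * s, β - c * s', by nlinarith, ?_, by nlinarith, ?_, fun x => ⟨?_, ?_⟩⟩
  · nlinarith [hK.lower_le_upper, div_le_one_of_le₀ hK.lower_le_upper hK.upper_pos.le]
  · linear_combination (-c) * hss' - (β - α) * hcI'
  · have := hK.mul_integral_sub_le_kernelOp_sub hg hαg' hlo x
    rw [kernelOp_const_mul] at this
    nlinarith [hcF x, hK.kernelOp_pos hg' hg'pos x]
  · have := hK.mul_integral_sub_le_kernelOp_sub hβg' hg hhi x
    rw [kernelOp_const_mul] at this
    nlinarith [hcF x, hK.kernelOp_pos hg' hg'pos x]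

theorem ratioPinched_sinkhornStep (hK : KernelBounds K m M) {g g' : ℝ → ℝ}
    (hg : ContinuousOn g (Icc 0 1)) (hg' : ContinuousOn g' (Icc 0 1))
    (hg'pos : ∀ y ∈ Icc (0:ℝ) 1, 0 < g' y) {α β : ℝ} (hα : 0 < α)
    (hlo : ∀ y ∈ Icc (0:ℝ) 1, α * g' y ≤ g y) (hhi : ∀ y ∈ Icc (0:ℝ) 1, g y ≤ β * g' y) :
    RatioPinched (sinkhornStep K g) (sinkhornStep K g') (1 + (1 - m / (2 * M)) * (β / α - 1)) := by
  obtain ⟨α₁, β₁, hαα₁, hα₁β₁, hβ₁β, hgap, hF⟩ :=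
    hK.exists_ratio_bounds_kernelOp hg hg' hg'pos hlo hhi
  have hgpos : ∀ y ∈ Icc (0:ℝ) 1, 0 < g y :=
    fun y hy => (mul_pos hα (hg'pos y hy)).trans_le (hlo y hy)
  have hα₁ : 0 < α₁ := hα.trans_le hαα₁
  have hβ₁ : 0 < β₁ := hα₁.trans_le hα₁β₁
  have hβ : 0 < β := hβ₁.trans_le hβ₁β
  have hθ : 0 ≤ 1 - m / M := sub_nonneg.2 (div_le_one_of_le₀ hK.lower_le_upper hK.upper_pos.le)
  have hκ : (1 + (1 - m / M)) / 2 = 1 - m / (2 * M) := by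
    field_simp
    ring
  refine ⟨√(α / β₁), √(β / α₁), by positivity,
    Real.sqrt_le_one.2 ((div_le_one hβ₁).2 (hαα₁.trans hα₁β₁)),
    Real.one_le_sqrt.2 ((one_le_div hα₁).2 (hα₁β₁.trans hβ₁β)), ?_, fun x hx => ⟨?_, ?_⟩⟩
  · rw [← hκ]
    exact sqrt_div_le_mul_sqrt_div hα (hαα₁.trans (hα₁β₁.trans hβ₁β)) hαα₁ hα₁β₁ hθ hgap.le
  · rw [sinkhornStep, sinkhornStep, ← Real.sqrt_mul (by positivity), div_mul_div_comm]
    exact Real.sqrt_le_sqrt (div_le_div₀ (hgpos x hx).le (hlo x hx)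
      (hK.kernelOp_pos hg hgpos x) (hF x).2)
  · rw [sinkhornStep, sinkhornStep, ← Real.sqrt_mul (by positivity), div_mul_div_comm]
    exact Real.sqrt_le_sqrt (div_le_div₀ (by have := hg'pos x hx; positivity) (hhi x hx)
      (mul_pos hα₁ (hK.kernelOp_pos hg' hg'pos x)) (hF x).1)

theorem exists_bounds_sinkhornStep (hK : KernelBounds K m M) {g : ℝ → ℝ}
    (hg : ContinuousOn g (Icc 0 1)) {a : ℝ} (ha : 0 < a)
    (hbd : ∀ x ∈ Icc (0:ℝ) 1, a ≤ g x ∧ g x ≤ M / m * a) :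
    ∃ a', √(m / M ^ 2) ≤ a' ∧ M / m * a' ≤ √(M / m ^ 2) ∧
      ∀ x ∈ Icc (0:ℝ) 1, a' ≤ sinkhornStep K g x ∧ sinkhornStep K g x ≤ M / m * a' := by
  have hm := hK.pos
  have hM := hK.upper_pos
  have hg0 : ∀ x ∈ Icc (0:ℝ) 1, 0 ≤ g x := fun x hx => ha.le.trans (hbd x hx).1
  have hgI : IntervalIntegrable g volume 0 1 := hg.intervalIntegrable_of_Icc zero_le_one
  set I := ∫ y in (0:ℝ)..1, g y
  have haI : a ≤ I := by
    simpa using intervalIntegral.integral_mono_on zero_le_one intervalIntegrable_const hgI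
      fun x hx => (hbd x hx).1
  have hIa : I ≤ M / m * a := by
    simpa using intervalIntegral.integral_mono_on zero_le_one hgI intervalIntegrable_const
      fun x hx => (hbd x hx).2
  have hI : 0 < I := ha.trans_le haI
  have hscale : M / m * √(a / (M * I)) = √(M / m * a / (m * I)) := by
    rw [show M / m * a / (m * I) = (M / m) ^ 2 * (a / (M * I)) by field_simp,
      Real.sqrt_mul (sq_nonneg _), Real.sqrt_sq (by positivity)]
  refine ⟨√(a / (M * I)), Real.sqrt_le_sqrt ?_, hscale ▸ Real.sqrt_le_sqrt ?_,
    fun x hx => ⟨Real.sqrt_le_sqrt ?_, hscale ▸ Real.sqrt_le_sqrt ?_⟩⟩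
  · rw [div_le_div_iff₀ (by positivity) (by positivity)]
    have : m * I ≤ M * a := by rwa [div_mul_eq_mul_div, le_div_iff₀' hm] at hIa
    nlinarith
  · rw [div_le_div_iff₀ (by positivity) (by positivity)]
    field_simp
    nlinarith
  · exact div_le_div₀ (hg0 x hx) (hbd x hx).1 (hK.kernelOp_pos hg
      (fun y hy => ha.trans_le (hbd y hy).1) x) (hK.kernelOp_le_mul_integral hg hg0 x)
  · exact div_le_div₀ (by positivity) (hbd x hx).2 (by positivity)
      (hK.mul_integral_le_kernelOp hg hg0 x)

theorem sinkhornIter_bounds (hK : KernelBounds K m M) (t : ℕ) :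
    Continuous (sinkhornIter K t) ∧ ∃ a, 0 < a ∧
      ∀ x ∈ Icc (0:ℝ) 1, a ≤ sinkhornIter K t x ∧ sinkhornIter K t x ≤ M / m * a := by
  induction t with
  | zero =>
    refine ⟨continuous_const, 1, one_pos, fun x _ => ?_⟩
    simpa [sinkhornIter] using (one_le_div hK.pos).2 hK.lower_le_upper
  | succ t ih =>
    obtain ⟨hcont, a, ha, hbd⟩ := ih
    obtain ⟨a', ha', -, hbd'⟩ := hK.exists_bounds_sinkhornStep hcont.continuousOn ha hbd
    rw [sinkhornIter_succ]
    exact ⟨hK.continuous_sinkhornStep hcont fun y hy => ha.trans_le (hbd y hy).1, a',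
      hK.sqrt_div_sq_pos.trans_le ha', hbd'⟩

theorem exists_bounds_sinkhornIter_succ (hK : KernelBounds K m M) :
    ∃ A B, 0 < A ∧ ∀ t, ∀ x ∈ Icc (0:ℝ) 1,
      A ≤ sinkhornIter K (t + 1) x ∧ sinkhornIter K (t + 1) x ≤ B := by
  refine ⟨√(m / M ^ 2), √(M / m ^ 2), hK.sqrt_div_sq_pos, fun t x hx => ?_⟩
  obtain ⟨hcont, a, ha, hbd⟩ := hK.sinkhornIter_bounds t
  obtain ⟨a', hAa', haB', hbd'⟩ := hK.exists_bounds_sinkhornStep hcont.continuousOn ha hbd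
  rw [sinkhornIter_succ]
  exact ⟨hAa'.trans (hbd' x hx).1, (hbd' x hx).2.trans haB'⟩

theorem ratioPinched_sinkhornIter (hK : KernelBounds K m M) {A B : ℝ} (hA : 0 < A)
    (hbd : ∀ t, ∀ x ∈ Icc (0:ℝ) 1, A ≤ sinkhornIter K (t + 1) x ∧ sinkhornIter K (t + 1) x ≤ B)
    (p t : ℕ) :
    RatioPinched (sinkhornIter K (t + p + 1)) (sinkhornIter K (t + 1))
      (1 + (1 - m / (2 * M)) ^ t * ((B / A) ^ 2 - 1)) := by
  induction t with
  | zero =>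
    have hAB : A ≤ B := (hbd 0 0 (by simp)).1.trans (hbd 0 0 (by simp)).2
    have hB : 0 < B := hA.trans_le hAB
    refine ⟨A / B, B / A, by positivity, (div_le_one hB).2 hAB, (one_le_div hA).2 hAB,
      le_of_eq (by field_simp; ring), fun x hx => ⟨?_, ?_⟩⟩
    · calc A / B * sinkhornIter K (0 + 1) x ≤ A / B * B :=
            mul_le_mul_of_nonneg_left (hbd 0 x hx).2 (by positivity)
        _ = A := div_mul_cancel₀ A hB.ne'
        _ ≤ sinkhornIter K (0 + p + 1) x := by simpa using (hbd p x hx).1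
    · calc sinkhornIter K (0 + p + 1) x ≤ B := by simpa using (hbd p x hx).2
        _ = B / A * A := (div_mul_cancel₀ B hA.ne').symm
        _ ≤ B / A * sinkhornIter K (0 + 1) x :=
            mul_le_mul_of_nonneg_left (hbd 0 x hx).1 (by positivity)
  | succ t ih =>
    obtain ⟨α, β, hα, -, -, hβ, hαβ⟩ := ih
    have hpos : ∀ s, ∀ y ∈ Icc (0:ℝ) 1, 0 < sinkhornIter K (s + 1) y :=
      fun s y hy => hA.trans_le (hbd s y hy).1
    rw [show t + 1 + p + 1 = t + p + 1 + 1 by ring, sinkhornIter_succ K (t + p + 1),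
      sinkhornIter_succ K (t + 1)]
    refine (hK.ratioPinched_sinkhornStep (hK.sinkhornIter_bounds _).1.continuousOn
      (hK.sinkhornIter_bounds _).1.continuousOn (hpos t) hα (fun y hy => (hαβ y hy).1)
      (fun y hy => (hαβ y hy).2)).mono ?_
    have : β / α ≤ 1 + (1 - m / (2 * M)) ^ t * ((B / A) ^ 2 - 1) := (div_le_iff₀ hα).2 hβ
    rw [pow_succ]
    nlinarith [hK.one_sub_div_two_mul_nonneg]

theorem tendsto_kernelOp_of_tendstoUniformlyOn (hK : KernelBounds K m M) {ι : Type*}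
    {l : Filter ι} {G : ι → ℝ → ℝ} {H : ℝ → ℝ} (hG : ∀ i, ContinuousOn (G i) (Icc 0 1))
    (hH : ContinuousOn H (Icc 0 1)) (hlim : TendstoUniformlyOn G H l (Icc 0 1)) (x : ℝ) :
    Tendsto (fun i => kernelOp K (G i) x) l (𝓝 (kernelOp K H x)) := by
  have hM := hK.upper_pos
  rw [Metric.tendsto_nhds]
  intro ε hε
  filter_upwards [Metric.tendstoUniformlyOn_iff.1 hlim (ε / (2 * M)) (by positivity)] with i hi
  rw [Real.dist_eq]
  calc |kernelOp K (G i) x - kernelOp K H x| ≤ M * (ε / (2 * M)) :=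
        hK.abs_kernelOp_sub_le (hG i) hH
          (fun y hy => by rw [abs_sub_comm, ← Real.dist_eq]; exact (hi y hy).le) x
    _ < ε := by field_simp; linarith

theorem uniformCauchySeqOn_sinkhornIter (hK : KernelBounds K m M) :
    UniformCauchySeqOn (sinkhornIter K) atTop (Icc 0 1) := by
  obtain ⟨A, B, hA, hbd⟩ := hK.exists_bounds_sinkhornIter_succ
  set κ := 1 - m / (2 * M)
  set C := ((B / A) ^ 2 - 1) * B
  have hκ0 : 0 ≤ κ := hK.one_sub_div_two_mul_nonneg
  have hρ₀ : 0 ≤ (B / A) ^ 2 - 1 := by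
    have hAB := (hbd 0 0 (by simp)).1.trans (hbd 0 0 (by simp)).2
    exact sub_nonneg.2 (one_le_pow₀ ((one_le_div hA).2 hAB))
  have hclose : ∀ N n, N + 1 ≤ n → ∀ x ∈ Icc (0:ℝ) 1,
      dist (sinkhornIter K n x) (sinkhornIter K (N + 1) x) ≤ κ ^ N * C := by
    intro N n hn x hx
    obtain ⟨p, rfl⟩ := Nat.exists_eq_add_of_le' hn
    rw [Real.dist_eq, show p + (N + 1) = N + p + 1 by ring]
    calc _ ≤ (1 + κ ^ N * ((B / A) ^ 2 - 1) - 1) * sinkhornIter K (N + 1) x :=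
          (hK.ratioPinched_sinkhornIter hA hbd p N).abs_sub_le hx (hA.trans_le (hbd N x hx).1).le
      _ = κ ^ N * ((B / A) ^ 2 - 1) * sinkhornIter K (N + 1) x := by ring
      _ ≤ κ ^ N * ((B / A) ^ 2 - 1) * B :=
          mul_le_mul_of_nonneg_left (hbd N x hx).2 (mul_nonneg (pow_nonneg hκ0 N) hρ₀)
      _ = κ ^ N * C := by ring
  have hlim : Tendsto (fun N => κ ^ N * C) atTop (𝓝 0) := by
    simpa using
      (tendsto_pow_atTop_nhds_zero_of_lt_one hκ0 hK.one_sub_div_two_mul_lt_one).mul_const C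
  rw [Metric.uniformCauchySeqOn_iff]
  intro ε hε
  obtain ⟨N, hN⟩ := (hlim.eventually (gt_mem_nhds (half_pos hε))).exists
  refine ⟨N + 1, fun n hn n' hn' x hx => ?_⟩
  calc dist (sinkhornIter K n x) (sinkhornIter K n' x)
      ≤ dist (sinkhornIter K n x) (sinkhornIter K (N + 1) x)
        + dist (sinkhornIter K n' x) (sinkhornIter K (N + 1) x) := dist_triangle_right _ _ _
    _ ≤ κ ^ N * C + κ ^ N * C := add_le_add (hclose N n hn x hx) (hclose N n' hn' x hx)
    _ < ε := by linarith

theorem isBalancing_of_tendstoUniformlyOn (hK : KernelBounds K m M) {H : ℝ → ℝ}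
    (hH : TendstoUniformlyOn (sinkhornIter K) H atTop (Icc 0 1)) : IsBalancing K H := by
  obtain ⟨A, B, hA, hbd⟩ := hK.exists_bounds_sinkhornIter_succ
  have hcont : ∀ t, ContinuousOn (sinkhornIter K t) (Icc 0 1) :=
    fun t => (hK.sinkhornIter_bounds t).1.continuousOn
  have hHc : ContinuousOn H (Icc 0 1) := hH.continuousOn (Frequently.of_forall hcont)
  have hlim : ∀ x ∈ Icc (0:ℝ) 1, Tendsto (fun t => sinkhornIter K (t + 1) x) atTop (𝓝 (H x)) :=
    fun x hx => (hH.tendsto_at hx).comp (tendsto_add_atTop_nat 1)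
  have hHpos : ∀ x ∈ Icc (0:ℝ) 1, 0 < H x := fun x hx =>
    hA.trans_le (ge_of_tendsto (hlim x hx) (Eventually.of_forall fun t => (hbd t x hx).1))
  refine ⟨hHc, hHpos, fun x hx => ?_⟩
  have hF := hK.kernelOp_pos hHc hHpos x
  have hstep : Tendsto (fun t => sinkhornIter K (t + 1) x) atTop (𝓝 (√(H x / kernelOp K H x))) := by
    simp only [sinkhornIter_succ]
    exact ((hH.tendsto_at hx).div (hK.tendsto_kernelOp_of_tendstoUniformlyOn hcont hHc hH x)
      hF.ne').sqrt
  exact (sqrt_div_eq_self_iff (hHpos x hx) hF).1 (tendsto_nhds_unique hstep (hlim x hx))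

theorem sinkhornStep_eq_of_isBalancing (hK : KernelBounds K m M) {h : ℝ → ℝ}
    (hh : IsBalancing K h) {x : ℝ} (hx : x ∈ Icc (0:ℝ) 1) : sinkhornStep K h x = h x :=
  (sqrt_div_eq_self_iff (hh.2.1 x hx) (hK.kernelOp_pos hh.1 hh.2.1 x)).2 (hh.2.2 x hx)

theorem exists_eqOn_const_mul_of_isBalancing (hK : KernelBounds K m M) {h h' : ℝ → ℝ}
    (hh : IsBalancing K h) (hh' : IsBalancing K h') :
    ∃ c, 0 < c ∧ ∀ x ∈ Icc (0:ℝ) 1, h' x = c * h x := by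
  have hpos := hh.2.1
  have hq : ContinuousOn (fun x => h' x / h x) (Icc 0 1) :=
    hh'.1.div hh.1 fun x hx => (hpos x hx).ne'
  obtain ⟨x₀, hx₀, hmin⟩ := isCompact_Icc.exists_isMinOn (nonempty_Icc.2 zero_le_one) hq
  obtain ⟨x₁, hx₁, hmax⟩ := isCompact_Icc.exists_isMaxOn (nonempty_Icc.2 zero_le_one) hq
  set α := h' x₀ / h x₀
  set β := h' x₁ / h x₁
  have hα : 0 < α := div_pos (hh'.2.1 x₀ hx₀) (hpos x₀ hx₀)
  have hlo : ∀ y ∈ Icc (0:ℝ) 1, α * h y ≤ h' y :=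
    fun y hy => (le_div_iff₀ (hpos y hy)).1 (hmin hy)
  have hhi : ∀ y ∈ Icc (0:ℝ) 1, h' y ≤ β * h y :=
    fun y hy => (div_le_iff₀ (hpos y hy)).1 (hmax hy)
  -- the step map fixes `h` and `h'` but shrinks the ratio `β / α` unless it is `1`
  obtain ⟨α', β', hα', -, -, hβ', hb'⟩ := hK.ratioPinched_sinkhornStep hh'.1 hh.1 hpos hα hlo hhi
  have hfix := fun {u} (hu : IsBalancing K u) {x} (hx : x ∈ Icc (0:ℝ) 1) =>
    hK.sinkhornStep_eq_of_isBalancing hu hx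
  have hα'α : α' ≤ α := by
    have := (hb' x₀ hx₀).1
    rwa [hfix hh hx₀, hfix hh' hx₀, ← le_div_iff₀ (hpos x₀ hx₀)] at this
  have hββ' : β ≤ β' := by
    have := (hb' x₁ hx₁).2
    rwa [hfix hh hx₁, hfix hh' hx₁, ← div_le_iff₀ (hpos x₁ hx₁)] at this
  have hratio : β / α ≤ 1 + (1 - m / (2 * M)) * (β / α - 1) :=
    (div_le_div₀ ((hα.le.trans (hmin hx₁)).trans hββ') hββ' hα' hα'α).trans
      ((div_le_iff₀ hα').2 hβ')
  have hβα : β ≤ α := by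
    rw [← div_le_one hα]
    nlinarith [hK.one_sub_div_two_mul_lt_one]
  exact ⟨α, hα, fun x hx => le_antisymm ((hhi x hx).trans
    (mul_le_mul_of_nonneg_right hβα (hpos x hx).le)) (hlo x hx)⟩

theorem eqOn_of_isBalancing (hK : KernelBounds K m M) {h h' : ℝ → ℝ} (hh : IsBalancing K h)
    (hh' : IsBalancing K h') : EqOn h' h (Icc 0 1) := by
  obtain ⟨c, hc, hch⟩ := hK.exists_eqOn_const_mul_of_isBalancing hh hh'
  have h0 : (0:ℝ) ∈ Icc (0:ℝ) 1 := left_mem_Icc.2 zero_le_one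
  have hF : kernelOp K h' 0 = c * kernelOp K h 0 := by
    rw [kernelOp, kernelOp, ← intervalIntegral.integral_const_mul]
    refine intervalIntegral.integral_congr fun y hy => ?_
    rw [uIcc_of_le zero_le_one] at hy
    simp only [hch y hy]
    ring
  have hc1 : c = 1 := by
    have h1 := hh'.2.2 0 h0
    rw [hch 0 h0, hF] at h1
    have hc2 : c ^ 2 = 1 := by linear_combination h1 - c ^ 2 * hh.2.2 0 h0
    nlinarith
  intro x hx
  rw [hch x hx, hc1, one_mul]

end KernelBounds

theorem exists_kernelBounds_eqOn {f : ℝ → ℝ → ℝ}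
    (hfc : ContinuousOn (fun p : ℝ × ℝ => f p.1 p.2) (Icc 0 1 ×ˢ Icc 0 1))
    (hfpos : ∀ x ∈ Icc (0:ℝ) 1, ∀ y ∈ Icc (0:ℝ) 1, 0 < f x y) :
    ∃ K m M, KernelBounds K m M ∧ ∀ x ∈ Icc (0:ℝ) 1, ∀ y ∈ Icc (0:ℝ) 1, K x y = f x y := by
  set π : ℝ → ℝ := fun x => projIcc 0 1 zero_le_one x
  have hπ : Continuous π := continuous_subtype_val.comp continuous_projIcc
  have hπmem : ∀ x, π x ∈ Icc (0:ℝ) 1 := fun x => (projIcc 0 1 zero_le_one x).2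
  have hπid : ∀ x ∈ Icc (0:ℝ) 1, π x = x := fun x hx => by simp [π, projIcc_of_mem _ hx]
  have hsq : IsCompact (Icc (0:ℝ) 1 ×ˢ Icc (0:ℝ) 1) := isCompact_Icc.prod isCompact_Icc
  have hne : (Icc (0:ℝ) 1 ×ˢ Icc (0:ℝ) 1).Nonempty := ⟨(0, 0), by simp⟩
  obtain ⟨p₀, hp₀, hmin⟩ := hsq.exists_isMinOn hne hfc
  obtain ⟨p₁, hp₁, hmax⟩ := hsq.exists_isMaxOn hne hfc
  refine ⟨fun x y => f (π x) (π y), f p₀.1 p₀.2, f p₁.1 p₁.2,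
    ⟨hfc.comp_continuous ((hπ.comp continuous_fst).prodMk (hπ.comp continuous_snd))
      fun p => ⟨hπmem p.1, hπmem p.2⟩, hfpos _ hp₀.1 _ hp₀.2,
      fun x y => isMinOn_iff.1 hmin (π x, π y) ⟨hπmem x, hπmem y⟩,
      fun x y => isMaxOn_iff.1 hmax (π x, π y) ⟨hπmem x, hπmem y⟩⟩,
    fun x hx y hy => by simp only [hπid x hx, hπid y hy]⟩

theorem integral_mul_mul_eq_mul_kernelOp {f K : ℝ → ℝ → ℝ}
    (hKf : ∀ x ∈ Icc (0:ℝ) 1, ∀ y ∈ Icc (0:ℝ) 1, K x y = f x y) (hsymm : ∀ x y, f x y = f y x)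
    (h : ℝ → ℝ) {y : ℝ} (hy : y ∈ Icc (0:ℝ) 1) :
    ∫ x in (0:ℝ)..1, h x * f x y * h y = h y * kernelOp K h y := by
  rw [kernelOp, ← intervalIntegral.integral_const_mul]
  refine intervalIntegral.integral_congr fun x hx => ?_
  rw [uIcc_of_le zero_le_one] at hx
  simp only [hKf y hy x hx, hsymm x y]
  ring

theorem eqOn_sinkhornIter {f K : ℝ → ℝ → ℝ}
    (hKf : ∀ x ∈ Icc (0:ℝ) 1, ∀ y ∈ Icc (0:ℝ) 1, K x y = f x y) {g : ℕ → ℝ → ℝ}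
    (hg0 : ∀ x, g 0 x = 1)
    (hgs : ∀ t x, g (t + 1) x = √(g t x / ∫ y in (0:ℝ)..1, f x y * g t y)) (t : ℕ) :
    EqOn (g t) (sinkhornIter K t) (Icc 0 1) := by
  induction t with
  | zero => exact fun x _ => hg0 x
  | succ t ih =>
    intro x hx
    rw [hgs, sinkhornIter_succ, sinkhornStep, kernelOp, ih hx]
    congr 2
    refine intervalIntegral.integral_congr fun y hy => ?_
    rw [uIcc_of_le zero_le_one] at hy
    simp only [hKf x hx y hy, ih hy]

end KernelSinkhorn

open KernelSinkhorn in
theorem ksk_existence_uniqueness_convergence_general (fh : ℝ → ℝ → ℝ)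
    (hfc : ContinuousOn (fun p : ℝ × ℝ => fh p.1 p.2)
      (Set.Icc 0 1 ×ˢ Set.Icc 0 1))
    (hfpos : ∀ x ∈ Set.Icc (0:ℝ) 1, ∀ y ∈ Set.Icc (0:ℝ) 1, 0 < fh x y)
    (hfsymm : ∀ x y, fh x y = fh y x) :
    ∃ hh : ℝ → ℝ, ContinuousOn hh (Set.Icc 0 1) ∧
      (∀ x ∈ Set.Icc (0:ℝ) 1, 0 < hh x) ∧
      (∀ y ∈ Set.Icc (0:ℝ) 1, ∫ x in (0:ℝ)..1, hh x * fh x y * hh y = 1) ∧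
      (∀ h' : ℝ → ℝ, ContinuousOn h' (Set.Icc 0 1) →
        (∀ x ∈ Set.Icc (0:ℝ) 1, 0 < h' x) →
        (∀ y ∈ Set.Icc (0:ℝ) 1, ∫ x in (0:ℝ)..1, h' x * fh x y * h' y = 1) →
        ∀ x ∈ Set.Icc (0:ℝ) 1, h' x = hh x) ∧
      (∀ g : ℕ → ℝ → ℝ, (∀ x, g 0 x = 1) →
        (∀ t x, g (t + 1) x
          = Real.sqrt (g t x / ∫ y in (0:ℝ)..1, fh x y * g t y)) →
        TendstoUniformlyOn (fun t => g t) hh atTop (Set.Icc 0 1)) := by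
  obtain ⟨K, m, M, hK, hKf⟩ := exists_kernelBounds_eqOn hfc hfpos
  obtain ⟨H, hH⟩ := hK.uniformCauchySeqOn_sinkhornIter.exists_tendstoUniformlyOn
  obtain ⟨hHc, hHpos, hHbal⟩ := hK.isBalancing_of_tendstoUniformlyOn hH
  have hbal := integral_mul_mul_eq_mul_kernelOp hKf hfsymm
  refine ⟨H, hHc, hHpos, fun y hy => (hbal H hy).trans (hHbal y hy), ?_, ?_⟩
  · intro h' hc' hpos' hbal'
    exact hK.eqOn_of_isBalancing ⟨hHc, hHpos, hHbal⟩
      ⟨hc', hpos', fun x hx => (hbal h' hx).symm.trans (hbal' x hx)⟩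
  · intro g hg0 hgs
    exact hH.congr (Eventually.of_forall fun t => (eqOn_sinkhornIter hKf hg0 hgs t).symm)

/-- For any bounded, continuous, strictly positive, symmetric
function f̂ on the unit square (e.g. a Gaussian kernel density estimate), there
is a unique strictly positive continuous balancing function ĥ, and the Kernel
Sinkhorn–Knopp iteration converges uniformly on [0,1] to ĥ. -/
theorem ksk_existence_uniqueness_convergence (fh : ℝ → ℝ → ℝ)
    (hfc : ContinuousOn (fun p : ℝ × ℝ => fh p.1 p.2)
      (Set.Icc 0 1 ×ˢ Set.Icc 0 1))
    (hfb : ∃ B : ℝ, ∀ x ∈ Set.Icc (0:ℝ) 1, ∀ y ∈ Set.Icc (0:ℝ) 1, fh x y ≤ B)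
    (hfpos : ∀ x ∈ Set.Icc (0:ℝ) 1, ∀ y ∈ Set.Icc (0:ℝ) 1, 0 < fh x y)
    (hfsymm : ∀ x y, fh x y = fh y x) :
    ∃ hh : ℝ → ℝ, ContinuousOn hh (Set.Icc 0 1) ∧
      (∀ x ∈ Set.Icc (0:ℝ) 1, 0 < hh x) ∧
      (∀ y ∈ Set.Icc (0:ℝ) 1, ∫ x in (0:ℝ)..1, hh x * fh x y * hh y = 1) ∧
      (∀ h' : ℝ → ℝ, ContinuousOn h' (Set.Icc 0 1) →
        (∀ x ∈ Set.Icc (0:ℝ) 1, 0 < h' x) →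
        (∀ y ∈ Set.Icc (0:ℝ) 1, ∫ x in (0:ℝ)..1, h' x * fh x y * h' y = 1) →
        ∀ x ∈ Set.Icc (0:ℝ) 1, h' x = hh x) ∧
      (∀ g : ℕ → ℝ → ℝ, (∀ x, g 0 x = 1) →
        (∀ t x, g (t + 1) x
          = Real.sqrt (g t x / ∫ y in (0:ℝ)..1, fh x y * g t y)) →
        TendstoUniformlyOn (fun t => g t) hh atTop (Set.Icc 0 1)) :=
  ksk_existence_uniqueness_convergence_general fh hfc hfpos hfsymm
end
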